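/- arXiv:1802.07066 — 7 statements merged into one kernel-verified Lean document; each statement's English description precedes it below -/
import Mathlib

section
/- Let Γ be a real 4×4 matrix such that ηΓ is symmetric, Γ² = Γ, tr Γ = 1, and xᵀ(ηΓ)x < 0 for some timelike vector x ∈ ℝ⁴. Then there exists a unit timelike vector u ∈ ℝ⁴ such that Γ = -u(ηu)ᵀ (i.e. Γ has mixed components Γ^α_β = -u^α u_β with u_β = (ηu)_β), and consequently xᵀ(ηΓ)x = -(⟨u,x⟩)² < 0 for every timelike vector x. -/
open Matrix

/-- The Minkowski metric matrix η = diag(-1,1,1,1) in an orthonormal frame of ℝ⁴. -/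
noncomputable def η : Matrix (Fin 4) (Fin 4) ℝ := Matrix.diagonal ![-1, 1, 1, 1]

/-- Minkowski inner product ⟨x,y⟩ = xᵀ η y. -/
noncomputable def mink (x y : Fin 4 → ℝ) : ℝ := x ⬝ᵥ (η *ᵥ y)

/-! Put `v = Γ x`. Since `ηΓ` is symmetric and `Γ² = Γ`, `⟨v, v⟩ = xᵀ(ηΓ)x =: q < 0`, and
`P = q⁻¹ v (ηv)ᵀ` is an idempotent with `ΓP = PΓ = P`. Then `Γ - P` is an idempotent of
trace `1 - 1 = 0`, hence zero, and normalising `v` gives `u`. The quadratic form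
`-⟨u, x⟩²` is negative on timelike `x` because the Minkowski-orthogonal complement of a
timelike vector is spacelike. -/

namespace Matrix

variable {K n : Type*} [Field K] [Fintype n] [DecidableEq n]

theorem IsIdempotentElem.eq_zero_of_trace_eq_zero [CharZero K] {P : Matrix n n K}
    (hP : IsIdempotentElem P) (htr : P.trace = 0) : P = 0 := by
  have hlin : IsIdempotentElem (toLinAlgEquiv' P) := hP.map _
  have : toLinAlgEquiv' P = 0 :=
    LinearMap.IsIdempotentElem.eq_zero_of_trace_eq_zero hlin ((trace_toLin'_eq P).trans htr)
  simpa using this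

theorem eq_vecMulVec_of_isIdempotentElem [CharZero K] {Γ : Matrix n n K}
    (hΓ : IsIdempotentElem Γ) (htr : Γ.trace = 1) {v a : n → K} (hv : Γ *ᵥ v = v)
    (ha : a ᵥ* Γ = a) (hav : a ⬝ᵥ v = 1) : Γ = vecMulVec v a := by
  have hP : IsIdempotentElem (vecMulVec v a) := by
    rw [IsIdempotentElem, vecMulVec_mul_vecMulVec, hav, one_smul]
  have hdiff : IsIdempotentElem (Γ - vecMulVec v a) :=
    hP.sub hΓ (by rw [vecMulVec_mul, ha]) (by rw [mul_vecMulVec, hv])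
  have htr0 : (Γ - vecMulVec v a).trace = 0 := by
    rw [trace_sub, trace_vecMulVec, dotProduct_comm, hav, htr, sub_self]
  exact sub_eq_zero.mp (hdiff.eq_zero_of_trace_eq_zero htr0)

theorem vecMul_eq_mulVec_of_isSymm {R n : Type*} [CommSemiring R] [Fintype n]
    {η Γ : Matrix n n R} (hη : η.IsSymm) (hηΓ : (η * Γ).IsSymm) (v : n → R) :
    (η *ᵥ v) ᵥ* Γ = η *ᵥ (Γ *ᵥ v) := by
  rw [← vecMul_transpose, hη.eq, vecMul_vecMul, ← hηΓ.eq, vecMul_transpose, mulVec_mulVec]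

end Matrix

theorem η_isSymm : η.IsSymm := by
  simp [η, IsSymm, diagonal_transpose]

theorem mink_eq_mulVec_dotProduct (x y : Fin 4 → ℝ) : mink x y = (η *ᵥ x) ⬝ᵥ y := by
  rw [mink, dotProduct_mulVec, ← vecMul_transpose, η_isSymm.eq, ← mulVec_transpose, η_isSymm.eq]

theorem mink_eq_coords (x y : Fin 4 → ℝ) :
    mink x y = -(x 0 * y 0) + x 1 * y 1 + x 2 * y 2 + x 3 * y 3 := by
  simp [mink, η, dotProduct, mulVec_diagonal, Fin.sum_univ_four]

theorem mink_self_nonneg_of_mink_eq_zero {u x : Fin 4 → ℝ} (hu : mink u u < 0)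
    (hux : mink u x = 0) : 0 ≤ mink x x := by
  rw [mink_eq_coords] at hu hux ⊢
  have hcs : (u 1 * x 1 + u 2 * x 2 + u 3 * x 3) ^ 2 ≤
      (u 1 ^ 2 + u 2 ^ 2 + u 3 ^ 2) * (x 1 ^ 2 + x 2 ^ 2 + x 3 ^ 2) := by
    nlinarith [sq_nonneg (u 1 * x 2 - u 2 * x 1), sq_nonneg (u 1 * x 3 - u 3 * x 1),
      sq_nonneg (u 2 * x 3 - u 3 * x 2)]
  have h0 : u 0 ^ 2 * x 0 ^ 2 = (u 1 * x 1 + u 2 * x 2 + u 3 * x 3) ^ 2 := by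
    rw [← mul_pow]; congr 1; linarith
  nlinarith [sq_nonneg (u 1), sq_nonneg (u 2), sq_nonneg (u 3),
    sq_nonneg (x 1), sq_nonneg (x 2), sq_nonneg (x 3)]

theorem exists_mink_self_eq_neg_one_and_vecMulVec_eq {v : Fin 4 → ℝ} (hv : mink v v < 0) :
    ∃ u, mink u u = -1 ∧ vecMulVec v ((mink v v)⁻¹ • η *ᵥ v) = -vecMulVec u (η *ᵥ u) := by
  set r := √(-mink v v)
  have hr : r ^ 2 = -mink v v := Real.sq_sqrt (by linarith)
  have hr0 : r ≠ 0 := (Real.sqrt_pos.mpr (by linarith)).ne'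
  refine ⟨r⁻¹ • v, ?_, ?_⟩
  · rw [mink, mulVec_smul, smul_dotProduct, dotProduct_smul, ← mink, smul_eq_mul, smul_eq_mul,
      ← mul_assoc, ← mul_inv, ← sq, hr]
    field_simp [hv.ne]
  · rw [mulVec_smul, smul_vecMulVec, vecMulVec_smul, vecMulVec_smul, smul_smul, ← neg_smul,
      ← mul_inv, ← sq, hr, inv_neg, neg_neg]

theorem dotProduct_mulVec_neg_vecMulVec (u x : Fin 4 → ℝ) :
    x ⬝ᵥ ((η * -vecMulVec u (η *ᵥ u)) *ᵥ x) = -mink u x ^ 2 := by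
  rw [mul_neg, mul_vecMulVec, neg_mulVec, vecMulVec_mulVec, dotProduct_neg, dotProduct_smul,
    mink_eq_mulVec_dotProduct, dotProduct_comm x]
  simp [sq]

theorem stmt_0 (Γ : Matrix (Fin 4) (Fin 4) ℝ)
    (hsym : (η * Γ).IsSymm)
    (hproj : Γ * Γ = Γ)
    (htr : Γ.trace = 1)
    (hx : ∃ x : Fin 4 → ℝ, mink x x < 0 ∧ x ⬝ᵥ ((η * Γ) *ᵥ x) < 0) :
    ∃ u : Fin 4 → ℝ, mink u u = -1 ∧ Γ = -(vecMulVec u (η *ᵥ u)) ∧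
      ∀ x : Fin 4 → ℝ, mink x x < 0 →
        x ⬝ᵥ ((η * Γ) *ᵥ x) = -(mink u x) ^ 2 ∧ x ⬝ᵥ ((η * Γ) *ᵥ x) < 0 := by
  obtain ⟨x, -, hxΓ⟩ := hx
  set v := Γ *ᵥ x
  have hv : Γ *ᵥ v = v := by rw [mulVec_mulVec, hproj]
  have hηv : (η *ᵥ v) ᵥ* Γ = η *ᵥ v := by rw [vecMul_eq_mulVec_of_isSymm η_isSymm hsym, hv]
  have hvv : mink v v = x ⬝ᵥ ((η * Γ) *ᵥ x) := by
    rw [mink_eq_mulVec_dotProduct, dotProduct_mulVec, hηv, ← mulVec_mulVec, dotProduct_comm]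
  have hq : mink v v < 0 := hvv ▸ hxΓ
  have hΓ : Γ = vecMulVec v ((mink v v)⁻¹ • η *ᵥ v) := by
    refine eq_vecMulVec_of_isIdempotentElem hproj htr hv (by rw [smul_vecMul, hηv]) ?_
    rw [smul_dotProduct, ← mink_eq_mulVec_dotProduct, smul_eq_mul, inv_mul_cancel₀ hq.ne]
  obtain ⟨u, hu, hvu⟩ := exists_mink_self_eq_neg_one_and_vecMulVec_eq hq
  refine ⟨u, hu, hΓ.trans hvu, fun y hy => ?_⟩
  have hquad : y ⬝ᵥ ((η * Γ) *ᵥ y) = -mink u y ^ 2 := by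
    rw [hΓ, hvu, dotProduct_mulVec_neg_vecMulVec]
  have huy : mink u y ≠ 0 := fun h => hy.not_ge (mink_self_nonneg_of_mink_eq_zero (by linarith) h)
  exact ⟨hquad, hquad ▸ neg_neg_of_pos (by positivity)⟩
end

section
/- Let R be a real symmetric 4×4 matrix. Set R̂ = ηR, r = tr R̂, N̂ = R̂ - (r/4)·Id, let s be the unique real number with s³ = -(8/3)·tr(N̂³), and (assuming s ≠ 0) set Γ = (1/4)·Id - (1/s)·N̂. If s ≠ 0, Γ² = Γ, and xᵀ(ηΓ)x < 0 for some timelike vector x, then there exist a unit timelike vector u ∈ ℝ⁴ and real numbers ρ, p such that R = (ρ+p)(ηu)(ηu)ᵀ + ((ρ-p)/2)·η (the Ricci tensor of a perfect fluid with velocity u, energy density ρ and pressure p); moreover Γ = -u(ηu)ᵀ, ρ = (3s+r)/4, p = (s-r)/4, and ρ + p = s ≠ 0. -/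
open Matrix

/-!
Since `ηR` and `η` are `η`-self-adjoint, so is the idempotent `Γ`, and `tr Γ = 1` because `N̂` is
traceless. Applying `Γ` to the given timelike vector yields a timelike fixed vector of `Γ`, which we
normalise to a unit vector `u`. The rank-one projection `P = -u (ηu)ᵀ` then satisfies
`ΓP = PΓ = P`, so `Γ - P` is an idempotent of trace `0`, hence zero. Solving `Γ = 1/4 - N̂/s`
for `R` gives the perfect-fluid form.
-/

lemma eta_mul_eta : η * η = 1 := by
  rw [η, diagonal_mul_diagonal]
  ext i j
  fin_cases i <;> fin_cases j <;> simp [diagonal, one_apply]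

lemma eta_transpose : ηᵀ = η := diagonal_transpose _

namespace Matrix

section Idempotent

variable {K n : Type*} [Field K] [CharZero K] [Fintype n] [DecidableEq n]

theorem eq_zero_of_isIdempotentElem_of_trace_eq_zero {A : Matrix n n K}
    (hA : IsIdempotentElem A) (htr : A.trace = 0) : A = 0 := by
  have := LinearMap.IsIdempotentElem.eq_zero_of_trace_eq_zero (hA.map toLinAlgEquiv') (by
    rw [LinearMap.trace_eq_matrix_trace K (Pi.basisFun K n), LinearMap.toMatrix_eq_toMatrix']
    exact (congrArg trace (LinearMap.toMatrix'_toLin' A)).trans htr)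
  simpa using this

theorem eq_of_isIdempotentElem_of_trace_eq {A B : Matrix n n K} (hA : IsIdempotentElem A)
    (hB : IsIdempotentElem B) (hBA : B * A = B) (hAB : A * B = B) (htr : A.trace = B.trace) :
    A = B :=
  sub_eq_zero.mp <| eq_zero_of_isIdempotentElem_of_trace_eq_zero (hB.sub hA hBA hAB)
    (by rw [trace_sub, htr, sub_self])

end Idempotent

section RankOne

variable {n : Type*} [Fintype n]

theorem isIdempotentElem_neg_vecMulVec {R : Type*} [CommRing R] {u w : n → R}
    (h : w ⬝ᵥ u = -1) : IsIdempotentElem (-vecMulVec u w) := by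
  rw [IsIdempotentElem, neg_mul_neg, vecMulVec_mul_vecMulVec, h, neg_one_smul, vecMulVec_neg]

theorem eq_neg_vecMulVec_of_isIdempotentElem {K : Type*} [Field K] [CharZero K] [DecidableEq n]
    {G Γ : Matrix n n K} (hΓ : IsIdempotentElem Γ) (htr : Γ.trace = 1)
    (hGΓ : Γᵀ * G = G * Γ) {u : n → K} (hu : Γ *ᵥ u = u) (huu : u ⬝ᵥ (G *ᵥ u) = -1) :
    Γ = -vecMulVec u (G *ᵥ u) := by
  have hPΓ : (G *ᵥ u) ᵥ* Γ = G *ᵥ u := by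
    rw [← mulVec_transpose, mulVec_mulVec, hGΓ, ← mulVec_mulVec, hu]
  refine eq_of_isIdempotentElem_of_trace_eq hΓ
    (isIdempotentElem_neg_vecMulVec (by rwa [dotProduct_comm])) ?_ ?_ ?_
  · rw [neg_mul, vecMulVec_mul, hPΓ]
  · rw [mul_neg, mul_vecMulVec, hu]
  · rw [trace_neg, trace_vecMulVec, huu, htr, neg_neg]

theorem exists_mulVec_eq_self_of_dotProduct_mul_mulVec_neg {G Γ : Matrix n n ℝ}
    (hΓ : IsIdempotentElem Γ) (hGΓ : Γᵀ * G = G * Γ) {x : n → ℝ}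
    (hx : x ⬝ᵥ ((G * Γ) *ᵥ x) < 0) : ∃ u, Γ *ᵥ u = u ∧ u ⬝ᵥ (G *ᵥ u) = -1 := by
  have hv : Γ *ᵥ (Γ *ᵥ x) = Γ *ᵥ x := by rw [mulVec_mulVec, hΓ.eq]
  have hvv : (Γ *ᵥ x) ⬝ᵥ (G *ᵥ (Γ *ᵥ x)) = x ⬝ᵥ ((G * Γ) *ᵥ x) := by
    rw [dotProduct_comm, ← dotProduct_transpose_mulVec, mulVec_mulVec, mulVec_mulVec, hGΓ,
      mul_assoc, hΓ.eq]
  set v := Γ *ᵥ x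
  set a := √(-(v ⬝ᵥ (G *ᵥ v)))
  have ha : 0 < a := Real.sqrt_pos.mpr (by linarith)
  have ha2 : a ^ 2 = -(v ⬝ᵥ (G *ᵥ v)) := Real.sq_sqrt (by linarith)
  refine ⟨a⁻¹ • v, by rw [mulVec_smul, hv], ?_⟩
  rw [mulVec_smul, smul_dotProduct, dotProduct_smul, smul_eq_mul, smul_eq_mul]
  field_simp
  linarith

end RankOne

end Matrix

theorem stmt_1_general (R : Matrix (Fin 4) (Fin 4) ℝ) (hRsym : R.IsSymm)
    (r : ℝ) (hr : r = (η * R).trace)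
    (N : Matrix (Fin 4) (Fin 4) ℝ) (hN : N = η * R - (r / 4) • 1)
    (s : ℝ)
    (hs : s ≠ 0)
    (Γ : Matrix (Fin 4) (Fin 4) ℝ) (hΓ : Γ = (1 / 4 : ℝ) • 1 - (1 / s) • N)
    (hproj : Γ * Γ = Γ)
    (hx : ∃ x : Fin 4 → ℝ, mink x x < 0 ∧ x ⬝ᵥ ((η * Γ) *ᵥ x) < 0) :
    ∃ (u : Fin 4 → ℝ) (ρ p : ℝ), mink u u = -1 ∧
      R = (ρ + p) • vecMulVec (η *ᵥ u) (η *ᵥ u) + ((ρ - p) / 2) • η ∧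
      Γ = -(vecMulVec u (η *ᵥ u)) ∧
      ρ = (3 * s + r) / 4 ∧ p = (s - r) / 4 ∧ ρ + p = s := by
  obtain ⟨x, -, hx⟩ := hx
  have hηR : η * (η * R) = R := by rw [← mul_assoc, eta_mul_eta, one_mul]
  have hηΓ : Γᵀ * η = η * Γ := by
    have hsymm : (η * Γ)ᵀ = η * Γ := by
      simp only [hΓ, hN, mul_sub, Matrix.mul_smul, mul_one, hηR, transpose_sub, transpose_smul,
        eta_transpose, hRsym.eq]
    rw [← hsymm, transpose_mul, eta_transpose]
  have htr : Γ.trace = 1 := by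
    simp only [hΓ, hN, trace_sub, trace_smul, trace_one, ← hr, Fintype.card_fin]
    field_simp
    ring
  obtain ⟨u, hu, huu⟩ := exists_mulVec_eq_self_of_dotProduct_mul_mulVec_neg hproj hηΓ hx
  have hΓu := eq_neg_vecMulVec_of_isIdempotentElem hproj htr hηΓ hu huu
  refine ⟨u, (3 * s + r) / 4, (s - r) / 4, huu, ?_, hΓu, rfl, rfl, by ring⟩
  have hN' : N = s • ((1 / 4 : ℝ) • 1 - Γ) := by
    rw [hΓ, sub_sub_cancel, smul_smul, mul_one_div_cancel hs, one_smul]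
  rw [← hηR, show η * R = N + (r / 4) • 1 by rw [hN, sub_add_cancel], hN', hΓu]
  simp only [mul_add, Matrix.mul_smul, mul_sub, mul_neg, mul_one, mul_vecMulVec]
  module

theorem stmt_1 (R : Matrix (Fin 4) (Fin 4) ℝ) (hRsym : R.IsSymm)
    (r : ℝ) (hr : r = (η * R).trace)
    (N : Matrix (Fin 4) (Fin 4) ℝ) (hN : N = η * R - (r / 4) • 1)
    (s : ℝ) (hs3 : s ^ 3 = -(8 / 3) * (N ^ 3).trace)
    (hs : s ≠ 0)
    (Γ : Matrix (Fin 4) (Fin 4) ℝ) (hΓ : Γ = (1 / 4 : ℝ) • 1 - (1 / s) • N)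
    (hproj : Γ * Γ = Γ)
    (hx : ∃ x : Fin 4 → ℝ, mink x x < 0 ∧ x ⬝ᵥ ((η * Γ) *ᵥ x) < 0) :
    ∃ (u : Fin 4 → ℝ) (ρ p : ℝ), mink u u = -1 ∧
      R = (ρ + p) • vecMulVec (η *ᵥ u) (η *ᵥ u) + ((ρ - p) / 2) • η ∧
      Γ = -(vecMulVec u (η *ᵥ u)) ∧
      ρ = (3 * s + r) / 4 ∧ p = (s - r) / 4 ∧ ρ + p = s :=
  stmt_1_general R hRsym r hr N hN s hs Γ hΓ hproj hx
end

section
/- Let E be a nonzero real symmetric 3×3 matrix with tr E = 0 having an eigenvalue of algebraic multiplicity exactly 2. Then tr(E²) > 0, the number ω := 2·tr(E³)/tr(E²) is nonzero and equals the simple eigenvalue of E (the eigenvalue of multiplicity 1), the double eigenvalue equals -ω/2, and the matrix B := (1/3)((2/ω)E + Id) is the orthogonal projection onto the one-dimensional eigenspace of the simple eigenvalue: B is symmetric, B² = B, tr B = 1, and EB = ωB. -/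
open Matrix Polynomial

theorem stmt_7 (E : Matrix (Fin 3) (Fin 3) ℝ)
    (hsym : E.IsSymm) (hE0 : E ≠ 0) (htr : E.trace = 0)
    -- E has an eigenvalue lam of algebraic multiplicity exactly 2
    (lam : ℝ) (hmult : Polynomial.rootMultiplicity lam E.charpoly = 2)
    (ω : ℝ) (hω : ω = 2 * (E ^ 3).trace / (E ^ 2).trace)
    (B : Matrix (Fin 3) (Fin 3) ℝ)
    (hB : B = (1 / 3 : ℝ) • ((2 / ω) • E + 1)) :
    0 < (E ^ 2).trace ∧
    ω ≠ 0 ∧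
    -- ω is the simple eigenvalue (algebraic multiplicity 1)
    Polynomial.rootMultiplicity ω E.charpoly = 1 ∧
    -- the double eigenvalue equals -ω/2
    lam = -ω / 2 ∧
    -- B is the orthogonal projection onto the eigenspace of the simple eigenvalue
    B.IsSymm ∧ B * B = B ∧ B.trace = 1 ∧ E * B = ω • B ∧
    (∀ v : Fin 3 → ℝ, B *ᵥ v = v ↔ E *ᵥ v = ω • v) := by
  classical
  have hmonic : E.charpoly.Monic := E.charpoly_monic
  have hdeg : E.charpoly.natDegree = 3 := by
    simpa using E.charpoly_natDegree_eq_dim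
  have hp0 : E.charpoly ≠ 0 := hmonic.ne_zero
  obtain ⟨q, hq⟩ : (X - C lam) ^ 2 ∣ E.charpoly :=
    hmult ▸ Polynomial.pow_rootMultiplicity_dvd E.charpoly lam
  have hqmonic : q.Monic :=
    ((monic_X_sub_C lam).pow 2).of_mul_monic_left (hq ▸ hmonic)
  have hqdeg : q.natDegree = 1 := by
    have h2 : ((X - C lam) ^ 2 : ℝ[X]).natDegree = 2 := by
      simp [natDegree_pow]
    have h3 := hdeg
    rw [hq, natDegree_mul (pow_ne_zero 2 (X_sub_C_ne_zero lam)) hqmonic.ne_zero, h2] at h3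
    omega
  have hqform : q = X + C (q.coeff 0) := hqmonic.eq_X_add_C hqdeg
  set a := q.coeff 0 with ha
  have hexp : E.charpoly = X^3 + C (a - 2*lam) * X^2 + C (lam^2 - 2*lam*a) * X + C (lam^2*a) := by
    rw [hq, hqform]
    simp only [C_sub, C_add, C_mul, C_pow, map_ofNat]
    ring
  have hc2 : E.charpoly.coeff 2 = a - 2*lam := by
    rw [hexp]
    simp only [coeff_add, coeff_C_mul, coeff_X_pow, coeff_X, coeff_C]
    norm_num
  have htrc := trace_eq_neg_charpoly_coeff E
  rw [htr, show Fintype.card (Fin 3) - 1 = 2 by simp, hc2] at htrc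
  have ha2 : a = 2*lam := by linarith
  have hlam0 : lam ≠ 0 := by
    intro h0
    have h1 : rootMultiplicity lam E.charpoly = 2 + rootMultiplicity lam (X + C a) := by
      rw [hq, hqform,
        Polynomial.rootMultiplicity_mul
          (mul_ne_zero (pow_ne_zero _ (X_sub_C_ne_zero lam)) (X_add_C_ne_zero a)),
        Polynomial.rootMultiplicity_X_sub_C_pow]
    rw [hmult, ha2, h0, show (X + C (2*(0:ℝ)) : ℝ[X]) = X - C 0 by simp,
      Polynomial.rootMultiplicity_X_sub_C_self] at h1
    norm_num at h1
  -- Cayley–Hamilton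
  have hCH : (E - lam • 1) ^ 2 * (E + (2*lam) • 1) = 0 := by
    have h := E.aeval_self_charpoly
    rw [hq, hqform, ha2] at h
    simpa [_root_.map_mul, map_pow, map_sub, map_add, aeval_X, aeval_C,
      Algebra.algebraMap_eq_smul_one, smul_smul, mul_comm lam 2] using h
  have c1 : Commute (E - lam • 1) (E + (2*lam) • 1) :=
    ((Commute.refl E).sub_left ((Commute.one_left E).smul_left lam)).add_right
      ((Commute.one_right (E - lam • 1)).smul_right (2*lam))
  have hN2 : ((E - lam • 1) * (E + (2*lam) • 1)) ^ 2 = 0 := by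
    rw [c1.mul_pow, pow_two (E + (2*lam) • 1), ← mul_assoc, hCH, zero_mul]
  have hNsymm : ((E - lam • 1) * (E + (2*lam) • 1))ᵀ
      = (E - lam • 1) * (E + (2*lam) • 1) := by
    rw [transpose_mul, transpose_add, transpose_sub, transpose_smul, transpose_smul,
      transpose_one, hsym.eq, c1.symm.eq]
  have hN0 : (E - lam • 1) * (E + (2*lam) • 1) = 0 := by
    have h := (Matrix.conjTranspose_mul_self_eq_zero
      (A := (E - lam • 1) * (E + (2*lam) • 1))).mp
    apply h
    rw [conjTranspose_eq_transpose_of_trivial, hNsymm, ← pow_two, hN2]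
  have hexpand : (E - lam • 1) * (E + (2*lam) • 1)
      = E * E + lam • E - (2*lam^2) • (1 : Matrix (Fin 3) (Fin 3) ℝ) := by
    simp only [sub_mul, mul_add, smul_mul_assoc, mul_smul_comm, smul_smul, one_mul, mul_one]
    module
  have hE2 : E * E = (2*lam^2) • (1 : Matrix (Fin 3) (Fin 3) ℝ) - lam • E := by
    rw [hexpand] at hN0
    rw [sub_eq_zero] at hN0
    exact eq_sub_of_add_eq hN0
  have htr2 : (E ^ 2).trace = 6 * lam ^ 2 := by
    rw [pow_two, hE2, trace_sub, trace_smul, trace_smul, trace_one, htr]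
    simp [Fintype.card_fin, smul_eq_mul]
    ring
  have hE3 : E ^ 3 = (3*lam^2) • E - (2*lam^3) • (1 : Matrix (Fin 3) (Fin 3) ℝ) := by
    rw [pow_succ, pow_two, hE2, sub_mul, smul_mul_assoc, one_mul, smul_mul_assoc, hE2]
    module
  have htr3 : (E ^ 3).trace = -6 * lam ^ 3 := by
    rw [hE3, trace_sub, trace_smul, trace_smul, trace_one, htr]
    simp [Fintype.card_fin, smul_eq_mul]
    ring
  have hω' : ω = -2*lam := by
    rw [hω, htr2, htr3]
    field_simp
  have hω0 : ω ≠ 0 := by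
    rw [hω']
    intro h
    apply hlam0
    linarith
  have htrpos : 0 < (E^2).trace := by
    rw [htr2]
    positivity
  have hmultω : rootMultiplicity ω E.charpoly = 1 := by
    rw [hq, hqform, ha2,
      show (X + C (2*lam) : ℝ[X]) = X - C ω by
        rw [hω', show (-2*lam : ℝ) = -(2*lam) by ring, map_neg, sub_neg_eq_add],
      Polynomial.rootMultiplicity_mul
        (mul_ne_zero (pow_ne_zero _ (X_sub_C_ne_zero lam)) (X_sub_C_ne_zero ω)),
      Polynomial.rootMultiplicity_X_sub_C_self,
      Polynomial.rootMultiplicity_eq_zero]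
    intro h
    have := h
    rw [Polynomial.IsRoot, eval_pow, eval_sub, eval_X, eval_C, hω'] at this
    have h3 : (-2*lam - lam)^2 ≠ 0 := by
      have : -2*lam - lam = -3*lam := by ring
      rw [this]
      positivity
    exact h3 this
  have hlameq : lam = -ω/2 := by rw [hω']; ring
  have hBform : B = (-(1/(3*lam))) • E + ((3:ℝ)⁻¹) • 1 := by
    rw [hB, hω', smul_add, smul_smul]
    congr 2
    · field_simp
    · norm_num
  have hBB : B * B = B := by
    rw [hBform]
    simp only [add_mul, mul_add, smul_mul_assoc, mul_smul_comm, one_mul, mul_one, hE2,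
      smul_sub, smul_smul, smul_add]
    match_scalars <;> field_simp <;> ring
  have hBsymm : B.IsSymm := by
    rw [Matrix.IsSymm, hBform, transpose_add, transpose_smul, transpose_smul, transpose_one,
      hsym.eq]
  have htrB : B.trace = 1 := by
    rw [hBform, trace_add, trace_smul, trace_smul, trace_one, htr]
    simp [Fintype.card_fin]
  have hEB : E * B = ω • B := by
    rw [hBform, hω']
    simp only [mul_add, mul_smul_comm, mul_one, hE2, smul_add, smul_smul, smul_sub]
    match_scalars <;> field_simp <;> ring
  refine ⟨htrpos, hω0, hmultω, hlameq, hBsymm, hBB, htrB, hEB, fun v => ?_⟩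
  constructor
  · intro hv
    calc E *ᵥ v = E *ᵥ (B *ᵥ v) := by rw [hv]
      _ = (E*B) *ᵥ v := by rw [mulVec_mulVec]
      _ = (ω•B) *ᵥ v := by rw [hEB]
      _ = ω • (B *ᵥ v) := by rw [smul_mulVec]
      _ = ω • v := by rw [hv]
  · intro hv
    rw [hB, smul_mulVec, add_mulVec, smul_mulVec, one_mulVec, hv, smul_smul,
      div_mul_cancel₀ 2 hω0]
    module
end

section
/- Assume on the open box B that S > 0, φ ≠ 0, ∂_zφ + φ∂_zν ≠ 0, and ω ≠ 0 (the strict Szekeres–Szafron case). If ∂_zω = 0 at every point of B, then ∂_x∂_zν = 0 and ∂_y∂_zν = 0 at every point of B. -/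
/-- Partial derivative with respect to the first variable (t). -/
noncomputable def pdt (f : ℝ → ℝ → ℝ) (t z : ℝ) : ℝ := deriv (fun s => f s z) t

/-- Partial derivative with respect to the second variable (z). -/
noncomputable def pdz (f : ℝ → ℝ → ℝ) (t z : ℝ) : ℝ := deriv (fun w => f t w) z

/-- Membership in the open box B = I×J×K×L ⊆ ℝ⁴. -/
def inBox (a₁ b₁ a₂ b₂ a₃ b₃ a₄ b₄ t z x y : ℝ) : Prop :=
  t ∈ Set.Ioo a₁ b₁ ∧ z ∈ Set.Ioo a₂ b₂ ∧ x ∈ Set.Ioo a₃ b₃ ∧ y ∈ Set.Ioo a₄ b₄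

lemma slice1_hasDerivAt {F : ℝ × ℝ → ℝ} (hF : Differentiable ℝ F) (t z : ℝ) :
    HasDerivAt (fun s => F (s, z)) (fderiv ℝ F (t, z) (1, 0)) t := by
  have h1 : HasDerivAt (fun s : ℝ => (s, z)) ((1:ℝ), (0:ℝ)) t :=
    (hasDerivAt_id t).prodMk (hasDerivAt_const t z)
  exact (hF (t, z)).hasFDerivAt.comp_hasDerivAt t h1

lemma pdt_eq_fderiv {f : ℝ → ℝ → ℝ} (hf : Differentiable ℝ (fun q : ℝ × ℝ => f q.1 q.2))
    (t z : ℝ) : pdt f t z = fderiv ℝ (fun q : ℝ × ℝ => f q.1 q.2) (t, z) (1, 0) :=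
  (slice1_hasDerivAt hf t z).deriv

lemma contDiff_uncurry_pdt {f : ℝ → ℝ → ℝ}
    (hf : ContDiff ℝ ((⊤ : ℕ∞) : WithTop ℕ∞) (fun q : ℝ × ℝ => f q.1 q.2)) :
    ContDiff ℝ ((⊤ : ℕ∞) : WithTop ℕ∞) (fun q : ℝ × ℝ => pdt f q.1 q.2) := by
  have h1 : ContDiff ℝ ((⊤ : ℕ∞) : WithTop ℕ∞) (fun q : ℝ × ℝ =>
      fderiv ℝ (fun q : ℝ × ℝ => f q.1 q.2) q (1, 0)) :=
    (hf.fderiv_right (le_of_eq (by simp))).clm_apply contDiff_const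
  have he : (fun q : ℝ × ℝ => pdt f q.1 q.2) = (fun q : ℝ × ℝ =>
      fderiv ℝ (fun q : ℝ × ℝ => f q.1 q.2) q (1, 0)) := by
    funext q
    exact pdt_eq_fderiv (hf.differentiable (by simp)) q.1 q.2
  rw [he]; exact h1

lemma slice2_contDiff {f : ℝ → ℝ → ℝ}
    (hf : ContDiff ℝ ((⊤ : ℕ∞) : WithTop ℕ∞) (fun q : ℝ × ℝ => f q.1 q.2)) (t : ℝ) :
    ContDiff ℝ ((⊤ : ℕ∞) : WithTop ℕ∞) (fun z => f t z) :=
  hf.comp (contDiff_const.prodMk contDiff_id)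

lemma contDiff_deriv_slice {g : ℝ → ℝ} (hg : ContDiff ℝ ((⊤ : ℕ∞) : WithTop ℕ∞) g) :
    ContDiff ℝ ((⊤ : ℕ∞) : WithTop ℕ∞) (deriv g) := (contDiff_infty_iff_deriv.mp hg).2

lemma pdz_slice_contDiff {f : ℝ → ℝ → ℝ}
    (hf : ContDiff ℝ ((⊤ : ℕ∞) : WithTop ℕ∞) (fun q : ℝ × ℝ => f q.1 q.2)) (t : ℝ) :
    ContDiff ℝ ((⊤ : ℕ∞) : WithTop ℕ∞) (fun z => pdz f t z) := by
  have h := contDiff_deriv_slice (slice2_contDiff hf t)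
  have he : (fun z => pdz f t z) = deriv (fun z => f t z) := by funext z; rfl
  rw [he]; exact h

lemma deriv_zero_of_zero_on_Ioo {f : ℝ → ℝ} {a b x : ℝ} (hx : x ∈ Set.Ioo a b)
    (h : ∀ ξ ∈ Set.Ioo a b, f ξ = 0) {d : ℝ} (hd : HasDerivAt f d x) : d = 0 := by
  have he : f =ᶠ[nhds x] (fun _ => (0:ℝ)) := by
    filter_upwards [Ioo_mem_nhds hx.1 hx.2] with ξ hξ using h ξ hξ
  have h2 : HasDerivAt (fun _ : ℝ => (0:ℝ)) d x := hd.congr_of_eventuallyEq he.symm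
  exact h2.unique (hasDerivAt_const x 0)



lemma circle_core {c p0 p1 px py p1x p1y q0 qx qy u u1 a2 : ℝ}
    (hc : c ≠ 0)
    (e0 : c * p1^2 = p0 * q0)
    (ex : c * (2*p1*p1x) = px*q0 + p0*qx)
    (ey : c * (2*p1*p1y) = py*q0 + p0*qy)
    (exx : c * (2*p1x^2 + 2*p1*u1) = u*q0 + 2*px*qx + p0*a2)
    (eyy : c * (2*p1y^2 + 2*p1*u1) = u*q0 + 2*py*qy + p0*a2)
    (exy : c * (2*p1x*p1y) = px*qy + py*qx) :
    p1x*p0 - p1*px = 0 ∧ p1y*p0 - p1*py = 0 := by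
  set m := p1x*p0 - p1*px with hm
  set mt := p1y*p0 - p1*py with hmt
  have h1 : c * (m * mt) = 0 := by
    rw [hm, hmt]
    linear_combination (p0^2/2) * exy - (p0*py/2) * ex - (p0*px/2) * ey + (px*py) * e0
  have h2 : c * (m^2 - mt^2) = 0 := by
    rw [hm, hmt]
    linear_combination (p0^2/2) * (exx - eyy) - p0*px*ex + p0*py*ey + (px^2-py^2)*e0
  have h1' : m * mt = 0 := by
    rcases mul_eq_zero.mp h1 with h | h
    · exact absurd h hc
    · exact h
  have h2' : m^2 - mt^2 = 0 := by
    rcases mul_eq_zero.mp h2 with h | h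
    · exact absurd h hc
    · exact h
  have hm4 : m^4 = 0 := by nlinarith [sq_nonneg m, sq_nonneg mt]
  have hmt4 : mt^4 = 0 := by nlinarith [sq_nonneg m, sq_nonneg mt]
  exact ⟨by simpa using pow_eq_zero_iff (n := 4) (by norm_num) |>.mp hm4,
    by simpa using pow_eq_zero_iff (n := 4) (by norm_num) |>.mp hmt4⟩

noncomputable def cq (a b c d ξ υ : ℝ) : ℝ := 1/2*a*(ξ^2+υ^2) + b*ξ + c*υ + 2*d

lemma cq_hasDerivAt_x (a b c d υ ξ : ℝ) :
    HasDerivAt (fun s => cq a b c d s υ) (a*ξ + b) ξ := by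
  unfold cq
  have h1 : HasDerivAt (fun s : ℝ => s^2 + υ^2) (2*ξ) ξ := by
    simpa using (hasDerivAt_pow 2 ξ).add_const (υ^2)
  have h2 := (h1.const_mul (1/2*a)).add ((hasDerivAt_id ξ).const_mul b)
  have h3 := (h2.add (hasDerivAt_const ξ (c*υ))).add_const (2*d)
  exact h3.congr_deriv (by ring)

lemma cq_hasDerivAt_y (a b c d ξ υ : ℝ) :
    HasDerivAt (fun s => cq a b c d ξ s) (a*υ + c) υ := by
  unfold cq
  have h1 : HasDerivAt (fun s : ℝ => ξ^2 + s^2) (2*υ) υ := by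
    simpa using ((hasDerivAt_pow 2 υ).const_add (ξ^2))
  have h2 := (h1.const_mul (1/2*a)).add ((hasDerivAt_id υ).const_mul c)
  have h3 := (h2.add (hasDerivAt_const υ (b*ξ))).add_const (2*d)
  convert h3 using 1
  · rfl
  · rfl
  · funext s; simp only [Pi.add_apply, id_eq]; ring
  · ring

lemma deriv_zero_of_zero_on_Ioo' {f : ℝ → ℝ} {a b x : ℝ} (hx : x ∈ Set.Ioo a b)
    (h : ∀ ξ ∈ Set.Ioo a b, f ξ = 0) {d : ℝ} (hd : HasDerivAt f d x) : d = 0 := by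
  have he : f =ᶠ[nhds x] (fun _ => (0:ℝ)) := by
    filter_upwards [Ioo_mem_nhds hx.1 hx.2] with ξ hξ using h ξ hξ
  have h2 : HasDerivAt (fun _ : ℝ => (0:ℝ)) d x := hd.congr_of_eventuallyEq he.symm
  exact h2.unique (hasDerivAt_const x 0)

lemma stepE {c u v1 v2 w u1 v11 v21 w1 a2 b2 c2 d2 a3 b3 a4 b4 x y : ℝ}
    (hc : c ≠ 0) (hx : x ∈ Set.Ioo a3 b3) (hy : y ∈ Set.Ioo a4 b4)
    (hkey : ∀ ξ ∈ Set.Ioo a3 b3, ∀ υ ∈ Set.Ioo a4 b4,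
      c * (cq u1 v11 v21 w1 ξ υ)^2 = cq u v1 v2 w ξ υ * cq a2 b2 c2 d2 ξ υ) :
    (u1*x+v11) * cq u v1 v2 w x y - cq u1 v11 v21 w1 x y * (u*x+v1) = 0 ∧
    (u1*y+v21) * cq u v1 v2 w x y - cq u1 v11 v21 w1 x y * (u*y+v2) = 0 := by
  -- first x-derivative identity on the whole rectangle
  have hgx : ∀ ξ ∈ Set.Ioo a3 b3, ∀ υ ∈ Set.Ioo a4 b4,
      c * (2 * cq u1 v11 v21 w1 ξ υ * (u1*ξ+v11)) -
        ((u*ξ+v1) * cq a2 b2 c2 d2 ξ υ + cq u v1 v2 w ξ υ * (a2*ξ+b2)) = 0 := by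
    intro ξ hξ υ hυ
    have h1 := cq_hasDerivAt_x u1 v11 v21 w1 υ ξ
    have h2 := cq_hasDerivAt_x u v1 v2 w υ ξ
    have h3 := cq_hasDerivAt_x a2 b2 c2 d2 υ ξ
    have hd : HasDerivAt (fun s => c * (cq u1 v11 v21 w1 s υ)^2
        - cq u v1 v2 w s υ * cq a2 b2 c2 d2 s υ)
        (c * (2 * cq u1 v11 v21 w1 ξ υ * (u1*ξ+v11)) -
          ((u*ξ+v1) * cq a2 b2 c2 d2 ξ υ + cq u v1 v2 w ξ υ * (a2*ξ+b2))) ξ := by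
      exact (((h1.pow 2).const_mul c).sub (h2.mul h3)).congr_deriv (by ring)
    exact deriv_zero_of_zero_on_Ioo' hξ
      (fun s hs => by have := hkey s hs υ hυ; linarith) hd
  -- first y-derivative identity on the whole rectangle
  have hgy : ∀ ξ ∈ Set.Ioo a3 b3, ∀ υ ∈ Set.Ioo a4 b4,
      c * (2 * cq u1 v11 v21 w1 ξ υ * (u1*υ+v21)) -
        ((u*υ+v2) * cq a2 b2 c2 d2 ξ υ + cq u v1 v2 w ξ υ * (a2*υ+c2)) = 0 := by
    intro ξ hξ υ hυ
    have h1 := cq_hasDerivAt_y u1 v11 v21 w1 ξ υ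
    have h2 := cq_hasDerivAt_y u v1 v2 w ξ υ
    have h3 := cq_hasDerivAt_y a2 b2 c2 d2 ξ υ
    have hd : HasDerivAt (fun s => c * (cq u1 v11 v21 w1 ξ s)^2
        - cq u v1 v2 w ξ s * cq a2 b2 c2 d2 ξ s)
        (c * (2 * cq u1 v11 v21 w1 ξ υ * (u1*υ+v21)) -
          ((u*υ+v2) * cq a2 b2 c2 d2 ξ υ + cq u v1 v2 w ξ υ * (a2*υ+c2))) υ := by
      exact (((h1.pow 2).const_mul c).sub (h2.mul h3)).congr_deriv (by ring)
    exact deriv_zero_of_zero_on_Ioo' hυ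
      (fun s hs => by have := hkey ξ hξ s hs; linarith) hd
  -- second derivatives at (x, y)
  have exx : c * (2*(u1*x+v11)^2 + 2*cq u1 v11 v21 w1 x y*u1) -
      (u * cq a2 b2 c2 d2 x y + 2*(u*x+v1)*(a2*x+b2) + cq u v1 v2 w x y * a2) = 0 := by
    have h1 := cq_hasDerivAt_x u1 v11 v21 w1 y x
    have h2 := cq_hasDerivAt_x u v1 v2 w y x
    have h3 := cq_hasDerivAt_x a2 b2 c2 d2 y x
    have hu1 : HasDerivAt (fun s : ℝ => u1*s+v11) u1 x := by
      simpa using ((hasDerivAt_id x).const_mul u1).add_const v11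
    have hux : HasDerivAt (fun s : ℝ => u*s+v1) u x := by
      simpa using ((hasDerivAt_id x).const_mul u).add_const v1
    have hax : HasDerivAt (fun s : ℝ => a2*s+b2) a2 x := by
      simpa using ((hasDerivAt_id x).const_mul a2).add_const b2
    have hd : HasDerivAt (fun s => c * (2 * cq u1 v11 v21 w1 s y * (u1*s+v11)) -
        ((u*s+v1) * cq a2 b2 c2 d2 s y + cq u v1 v2 w s y * (a2*s+b2)))
        (c * (2*(u1*x+v11)^2 + 2*cq u1 v11 v21 w1 x y*u1) -
          (u * cq a2 b2 c2 d2 x y + 2*(u*x+v1)*(a2*x+b2) + cq u v1 v2 w x y * a2)) x := by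
      exact (((((h1.const_mul (2:ℝ)).mul hu1).const_mul c).sub
        ((hux.mul h3).add (h2.mul hax)))).congr_deriv (by ring)
    exact deriv_zero_of_zero_on_Ioo' hx (fun s hs => hgx s hs y hy) hd
  have eyy : c * (2*(u1*y+v21)^2 + 2*cq u1 v11 v21 w1 x y*u1) -
      (u * cq a2 b2 c2 d2 x y + 2*(u*y+v2)*(a2*y+c2) + cq u v1 v2 w x y * a2) = 0 := by
    have h1 := cq_hasDerivAt_y u1 v11 v21 w1 x y
    have h2 := cq_hasDerivAt_y u v1 v2 w x y
    have h3 := cq_hasDerivAt_y a2 b2 c2 d2 x y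
    have hu1 : HasDerivAt (fun s : ℝ => u1*s+v21) u1 y := by
      simpa using ((hasDerivAt_id y).const_mul u1).add_const v21
    have hux : HasDerivAt (fun s : ℝ => u*s+v2) u y := by
      simpa using ((hasDerivAt_id y).const_mul u).add_const v2
    have hax : HasDerivAt (fun s : ℝ => a2*s+c2) a2 y := by
      simpa using ((hasDerivAt_id y).const_mul a2).add_const c2
    have hd : HasDerivAt (fun s => c * (2 * cq u1 v11 v21 w1 x s * (u1*s+v21)) -
        ((u*s+v2) * cq a2 b2 c2 d2 x s + cq u v1 v2 w x s * (a2*s+c2)))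
        (c * (2*(u1*y+v21)^2 + 2*cq u1 v11 v21 w1 x y*u1) -
          (u * cq a2 b2 c2 d2 x y + 2*(u*y+v2)*(a2*y+c2) + cq u v1 v2 w x y * a2)) y := by
      exact (((((h1.const_mul (2:ℝ)).mul hu1).const_mul c).sub
        ((hux.mul h3).add (h2.mul hax)))).congr_deriv (by ring)
    exact deriv_zero_of_zero_on_Ioo' hy (fun s hs => hgy x hx s hs) hd
  -- mixed derivative at (x, y): differentiate hgx (at ξ = x) in υ
  have exy : c * (2*(u1*y+v21)*(u1*x+v11)) -
      ((u*x+v1)*(a2*y+c2) + (u*y+v2)*(a2*x+b2)) = 0 := by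
    have h1 := cq_hasDerivAt_y u1 v11 v21 w1 x y
    have h2 := cq_hasDerivAt_y u v1 v2 w x y
    have h3 := cq_hasDerivAt_y a2 b2 c2 d2 x y
    have hd : HasDerivAt (fun s => c * (2 * cq u1 v11 v21 w1 x s * (u1*x+v11)) -
        ((u*x+v1) * cq a2 b2 c2 d2 x s + cq u v1 v2 w x s * (a2*x+b2)))
        (c * (2*(u1*y+v21)*(u1*x+v11)) -
          ((u*x+v1)*(a2*y+c2) + (u*y+v2)*(a2*x+b2))) y := by
      exact ((((h1.const_mul (2:ℝ)).mul_const (u1*x+v11)).const_mul c).sub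
        ((h3.const_mul (u*x+v1)).add (h2.mul_const (a2*x+b2)))).congr_deriv (by ring)
    exact deriv_zero_of_zero_on_Ioo' hy (fun s hs => hgx x hx s hs) hd
  -- assemble via the algebraic core
  have e0 := hkey x hx y hy
  have hgx0 := hgx x hx y hy
  have hgy0 := hgy x hx y hy
  exact circle_core (q0 := cq a2 b2 c2 d2 x y) (qx := a2*x+b2) (qy := a2*y+c2)
    (u := u) (u1 := u1) (a2 := a2) hc (by linarith) (by linarith)
    (by linarith) (by linarith) (by linarith) (by linarith)


lemma cq_comp_hasDerivAt {f g h k : ℝ → ℝ} {f' g' h' k' : ℝ} {z : ℝ} (ξ υ : ℝ)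
    (hf : HasDerivAt f f' z) (hg : HasDerivAt g g' z) (hh : HasDerivAt h h' z)
    (hk : HasDerivAt k k' z) :
    HasDerivAt (fun w => cq (f w) (g w) (h w) (k w) ξ υ) (cq f' g' h' k' ξ υ) z := by
  unfold cq
  have h1 := (((hf.const_mul (1/2:ℝ)).mul_const (ξ^2+υ^2)).add (hg.mul_const ξ)).add
    (hh.mul_const υ) |>.add (hk.const_mul (2:ℝ))
  exact h1

lemma keyalg {n n' p q q' F0 Fval P1 P2 Pv : ℝ} (hn : n ≠ 0) (hp : p ≠ 0) (hPv : Pv ≠ 0)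
    (hE : n' * (3*p*(q + p*F0)) - n * (3*q*(q + p*F0) + 3*p*(q' + (q*F0 + p*Fval))) = 0)
    (hF0 : F0 = -(P1/Pv)) (hFv : Fval = (P1^2 - P2*Pv)/Pv^2) :
    (n*p^2)*P1^2 = Pv*((n*p^2)*P2 + (n'*p*q - n*q^2 - n*p*q')*Pv - (n'*p^2 - 2*n*p*q)*P1) := by
  subst hF0 hFv
  have hE2 : Pv^2 * (n' * (3*p*(q + p*(-(P1/Pv)))) -
      n * (3*q*(q + p*(-(P1/Pv))) + 3*p*(q' + (q*(-(P1/Pv)) + p*((P1^2 - P2*Pv)/Pv^2))))) = 0 := by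
    rw [hE, mul_zero]
  have h1 : Pv^2 * (P1/Pv) = P1 * Pv := by field_simp
  have h2 : Pv^2 * ((P1^2 - P2*Pv)/Pv^2) = P1^2 - P2*Pv := by field_simp
  linear_combination (-1/3) * hE2 - (n'*p^2 - 2*n*p*q) * h1 - n*p^2 * h2

theorem stmt_10 (a₁ b₁ a₂ b₂ a₃ b₃ a₄ b₄ : ℝ)
    (φ : ℝ → ℝ → ℝ) (U V₁ V₂ W : ℝ → ℝ)
    -- smoothness of the class I Szekeres–Szafron data
    (hφ : ContDiff ℝ (⊤ : ℕ∞) (fun q : ℝ × ℝ => φ q.1 q.2))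
    (hU : ContDiff ℝ (⊤ : ℕ∞) U) (hV₁ : ContDiff ℝ (⊤ : ℕ∞) V₁)
    (hV₂ : ContDiff ℝ (⊤ : ℕ∞) V₂) (hW : ContDiff ℝ (⊤ : ℕ∞) W)
    -- S(z,x,y) = ½U(z)(x²+y²) + V₁(z)x + V₂(z)y + 2W(z), ν = -ln S
    (S ν : ℝ → ℝ → ℝ → ℝ)
    (hS : ∀ z x y, S z x y =
      (1 / 2) * U z * (x ^ 2 + y ^ 2) + V₁ z * x + V₂ z * y + 2 * W z)
    (hν : ∀ z x y, ν z x y = -Real.log (S z x y))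
    -- the simple Weyl eigenvalue ω = (φ ∂_zφ̈ - φ̈ ∂_zφ)/(3φ(∂_zφ + φ ∂_zν))
    (ω : ℝ → ℝ → ℝ → ℝ → ℝ)
    (hω : ∀ t z x y, ω t z x y =
      (φ t z * pdz (pdt (pdt φ)) t z - pdt (pdt φ) t z * pdz φ t z)
        / (3 * φ t z * (pdz φ t z + φ t z * deriv (fun w => ν w x y) z)))
    -- strictness assumptions on the box
    (hSpos : ∀ t z x y, inBox a₁ b₁ a₂ b₂ a₃ b₃ a₄ b₄ t z x y → 0 < S z x y)
    (hφ0 : ∀ t z x y, inBox a₁ b₁ a₂ b₂ a₃ b₃ a₄ b₄ t z x y → φ t z ≠ 0)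
    (hden : ∀ t z x y, inBox a₁ b₁ a₂ b₂ a₃ b₃ a₄ b₄ t z x y →
      pdz φ t z + φ t z * deriv (fun w => ν w x y) z ≠ 0)
    (hω0 : ∀ t z x y, inBox a₁ b₁ a₂ b₂ a₃ b₃ a₄ b₄ t z x y → ω t z x y ≠ 0)
    -- ∂_z ω = 0 at every point of the box
    (hωz : ∀ t z x y, inBox a₁ b₁ a₂ b₂ a₃ b₃ a₄ b₄ t z x y →
      deriv (fun w => ω t w x y) z = 0) :
    ∀ t z x y, inBox a₁ b₁ a₂ b₂ a₃ b₃ a₄ b₄ t z x y →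
      deriv (fun ξ => deriv (fun w => ν w ξ y) z) x = 0 ∧
      deriv (fun υ => deriv (fun w => ν w x υ) z) y = 0 := by
  intro t z x y hbox
  obtain ⟨ht, hz, hx, hy⟩ := hbox
  have hone : ((⊤ : ℕ∞) : WithTop ℕ∞) ≠ 0 := by simp
  -- smoothness downgrades
  have hφ' : ContDiff ℝ ((⊤ : ℕ∞) : WithTop ℕ∞) (fun q : ℝ × ℝ => φ q.1 q.2) := hφ.of_le (by simp)
  have hU' : ContDiff ℝ ((⊤ : ℕ∞) : WithTop ℕ∞) U := hU.of_le (by simp)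
  have hV₁' : ContDiff ℝ ((⊤ : ℕ∞) : WithTop ℕ∞) V₁ := hV₁.of_le (by simp)
  have hV₂' : ContDiff ℝ ((⊤ : ℕ∞) : WithTop ℕ∞) V₂ := hV₂.of_le (by simp)
  have hW' : ContDiff ℝ ((⊤ : ℕ∞) : WithTop ℕ∞) W := hW.of_le (by simp)
  have hdU : ContDiff ℝ ((⊤ : ℕ∞) : WithTop ℕ∞) (deriv U) := contDiff_deriv_slice hU'
  have hdV₁ : ContDiff ℝ ((⊤ : ℕ∞) : WithTop ℕ∞) (deriv V₁) := contDiff_deriv_slice hV₁'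
  have hdV₂ : ContDiff ℝ ((⊤ : ℕ∞) : WithTop ℕ∞) (deriv V₂) := contDiff_deriv_slice hV₂'
  have hdW : ContDiff ℝ ((⊤ : ℕ∞) : WithTop ℕ∞) (deriv W) := contDiff_deriv_slice hW'
  have hφt : ContDiff ℝ ((⊤ : ℕ∞) : WithTop ℕ∞) (fun w => φ t w) := slice2_contDiff hφ' t
  have hA2 : ContDiff ℝ ((⊤ : ℕ∞) : WithTop ℕ∞) (fun q : ℝ × ℝ => pdt (pdt φ) q.1 q.2) :=
    contDiff_uncurry_pdt (contDiff_uncurry_pdt hφ')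
  have hA2t : ContDiff ℝ ((⊤ : ℕ∞) : WithTop ℕ∞) (fun w => pdt (pdt φ) t w) := slice2_contDiff hA2 t
  have hA3t : ContDiff ℝ ((⊤ : ℕ∞) : WithTop ℕ∞) (fun w => pdz (pdt (pdt φ)) t w) := pdz_slice_contDiff hA2 t
  have hqt : ContDiff ℝ ((⊤ : ℕ∞) : WithTop ℕ∞) (fun w => pdz φ t w) := pdz_slice_contDiff hφ' t
  -- Step A: derivative of ν in z
  have haveA : ∀ z' ∈ Set.Ioo a₂ b₂, ∀ ξ ∈ Set.Ioo a₃ b₃, ∀ υ ∈ Set.Ioo a₄ b₄,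
      HasDerivAt (fun w => ν w ξ υ)
        (-(cq (deriv U z') (deriv V₁ z') (deriv V₂ z') (deriv W z') ξ υ / S z' ξ υ)) z' := by
    intro z' hz' ξ hξ υ hυ
    have hfun : (fun w => ν w ξ υ) =
        fun w => -Real.log ((1/2)*U w*(ξ^2+υ^2) + V₁ w*ξ + V₂ w*υ + 2*W w) := by
      funext w
      rw [hν, hS]
    have hin : HasDerivAt (fun w => (1/2)*U w*(ξ^2+υ^2) + V₁ w*ξ + V₂ w*υ + 2*W w)
        (cq (deriv U z') (deriv V₁ z') (deriv V₂ z') (deriv W z') ξ υ) z' := by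
      have h1 := (hU'.differentiable hone z').hasDerivAt
      have h2 := (hV₁'.differentiable hone z').hasDerivAt
      have h3 := (hV₂'.differentiable hone z').hasDerivAt
      have h4 := (hW'.differentiable hone z').hasDerivAt
      have := (((h1.const_mul (1/2 : ℝ)).mul_const (ξ^2+υ^2)).add (h2.mul_const ξ)).add
        (h3.mul_const υ) |>.add (h4.const_mul (2:ℝ))
      exact this
    have hSne : (1/2)*U z'*(ξ^2+υ^2) + V₁ z'*ξ + V₂ z'*υ + 2*W z' ≠ 0 := by
      have := hSpos t z' ξ υ ⟨ht, hz', hξ, hυ⟩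
      rw [hS] at this
      norm_num at this ⊢
      linarith
    rw [hfun]
    exact (hin.log hSne).neg.congr_deriv (by rw [hS])
  have hνd : ∀ z' ∈ Set.Ioo a₂ b₂, ∀ ξ ∈ Set.Ioo a₃ b₃, ∀ υ ∈ Set.Ioo a₄ b₄,
      deriv (fun w => ν w ξ υ) z' =
        -(cq (deriv U z') (deriv V₁ z') (deriv V₂ z') (deriv W z') ξ υ / S z' ξ υ) :=
    fun z' hz' ξ hξ υ hυ => (haveA z' hz' ξ hξ υ hυ).deriv
  -- basic nonvanishing facts at the base point
  have hbox0 : inBox a₁ b₁ a₂ b₂ a₃ b₃ a₄ b₄ t z x y := ⟨ht, hz, hx, hy⟩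
  have hp0 : φ t z ≠ 0 := hφ0 t z x y hbox0
  have hnne : φ t z * pdz (pdt (pdt φ)) t z - pdt (pdt φ) t z * pdz φ t z ≠ 0 := by
    intro h
    apply hω0 t z x y hbox0
    rw [hω, h, zero_div]
  -- the key polynomial identity on the rectangle
  obtain ⟨c, hc0, A2, B2, C2, D2, hkey⟩ : ∃ c, c ≠ 0 ∧ ∃ A2 B2 C2 D2 : ℝ,
      ∀ ξ ∈ Set.Ioo a₃ b₃, ∀ υ ∈ Set.Ioo a₄ b₄,
        c * (cq (deriv U z) (deriv V₁ z) (deriv V₂ z) (deriv W z) ξ υ)^2 =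
          cq (U z) (V₁ z) (V₂ z) (W z) ξ υ * cq A2 B2 C2 D2 ξ υ := by
    set u := U z with hu
    set v1 := V₁ z with hv1
    set v2 := V₂ z with hv2
    set w0 := W z with hw0
    set u1 := deriv U z with hu1
    set v11 := deriv V₁ z with hv11
    set v21 := deriv V₂ z with hv21
    set w1 := deriv W z with hw1
    set u2 := deriv (deriv U) z with hu2
    set v12 := deriv (deriv V₁) z with hv12
    set v22 := deriv (deriv V₂) z with hv22
    set w2 := deriv (deriv W) z with hw2
    set p := φ t z with hp
    set qq := pdz φ t z with hqq
    set qq' := deriv (fun w => pdz φ t w) z with hqq'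
    set A3v := pdz (pdt (pdt φ)) t z with hA3v
    set A2v := pdt (pdt φ) t z with hA2v
    set n' := deriv (fun w =>
      φ t w * pdz (pdt (pdt φ)) t w - pdt (pdt φ) t w * pdz φ t w) z with hnn'
    refine ⟨(p * A3v - A2v * qq) * p^2, mul_ne_zero hnne (pow_ne_zero 2 hp0),
      (p * A3v - A2v * qq)*p^2*u2 + (n'*p*qq - (p * A3v - A2v * qq)*qq^2 -
        (p * A3v - A2v * qq)*p*qq')*u - (n'*p^2 - 2*(p * A3v - A2v * qq)*p*qq)*u1,
      (p * A3v - A2v * qq)*p^2*v12 + (n'*p*qq - (p * A3v - A2v * qq)*qq^2 -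
        (p * A3v - A2v * qq)*p*qq')*v1 - (n'*p^2 - 2*(p * A3v - A2v * qq)*p*qq)*v11,
      (p * A3v - A2v * qq)*p^2*v22 + (n'*p*qq - (p * A3v - A2v * qq)*qq^2 -
        (p * A3v - A2v * qq)*p*qq')*v2 - (n'*p^2 - 2*(p * A3v - A2v * qq)*p*qq)*v21,
      (p * A3v - A2v * qq)*p^2*w2 + (n'*p*qq - (p * A3v - A2v * qq)*qq^2 -
        (p * A3v - A2v * qq)*p*qq')*w0 - (n'*p^2 - 2*(p * A3v - A2v * qq)*p*qq)*w1,
      ?_⟩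
    intro ξ hξ υ hυ
    have hbox' : inBox a₁ b₁ a₂ b₂ a₃ b₃ a₄ b₄ t z ξ υ := ⟨ht, hz, hξ, hυ⟩
    have hpos : 0 < S z ξ υ := hSpos t z ξ υ hbox'
    have hPvne : S z ξ υ ≠ 0 := ne_of_gt hpos
    -- derivative of the numerator quadratic (z-direction)
    have hdnum : HasDerivAt
        (fun z' => cq (deriv U z') (deriv V₁ z') (deriv V₂ z') (deriv W z') ξ υ)
        (cq u2 v12 v22 w2 ξ υ) z := by
      rw [hu2, hv12, hv22, hw2]
      exact cq_comp_hasDerivAt ξ υ (hdU.differentiable hone z).hasDerivAt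
        (hdV₁.differentiable hone z).hasDerivAt (hdV₂.differentiable hone z).hasDerivAt
        (hdW.differentiable hone z).hasDerivAt
    -- derivative of the denominator quadratic (z-direction)
    have hdden : HasDerivAt (fun z' => cq (U z') (V₁ z') (V₂ z') (W z') ξ υ)
        (cq u1 v11 v21 w1 ξ υ) z := by
      rw [hu1, hv11, hv21, hw1]
      exact cq_comp_hasDerivAt ξ υ (hU'.differentiable hone z).hasDerivAt
        (hV₁'.differentiable hone z).hasDerivAt (hV₂'.differentiable hone z).hasDerivAt
        (hW'.differentiable hone z).hasDerivAt
    have hcdS : cq (U z) (V₁ z) (V₂ z) (W z) ξ υ = S z ξ υ := by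
      rw [hS]; rfl
    have hcdne : cq (U z) (V₁ z) (V₂ z) (W z) ξ υ ≠ 0 := by rw [hcdS]; exact hPvne
    -- derivative of F := z' ↦ ∂_z ν
    have hdG := ((hdnum.div hdden hcdne).neg)
    have heq : (fun z' => deriv (fun w => ν w ξ υ) z') =ᶠ[nhds z]
        (fun z' => -(cq (deriv U z') (deriv V₁ z') (deriv V₂ z') (deriv W z') ξ υ /
          cq (U z') (V₁ z') (V₂ z') (W z') ξ υ)) := by
      filter_upwards [Ioo_mem_nhds hz.1 hz.2] with w hw
      rw [hνd w hw ξ hξ υ hυ, hS]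
      rfl
    have hFval : -((cq u2 v12 v22 w2 ξ υ * cq (U z) (V₁ z) (V₂ z) (W z) ξ υ -
          cq (deriv U z) (deriv V₁ z) (deriv V₂ z) (deriv W z) ξ υ *
            cq u1 v11 v21 w1 ξ υ) / cq (U z) (V₁ z) (V₂ z) (W z) ξ υ ^ 2) =
        ((cq u1 v11 v21 w1 ξ υ)^2 - cq u2 v12 v22 w2 ξ υ * S z ξ υ) / (S z ξ υ)^2 := by
      rw [hcdS, hu1, hv11, hv21, hw1]
      ring
    rw [hFval] at hdG
    have hdF : HasDerivAt (fun z' => deriv (fun w => ν w ξ υ) z')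
        (((cq u1 v11 v21 w1 ξ υ)^2 - cq u2 v12 v22 w2 ξ υ * S z ξ υ) / (S z ξ υ)^2) z :=
      hdG.congr_of_eventuallyEq heq
    -- derivative facts for φ-components
    have hdφz : HasDerivAt (fun w => φ t w) qq z := (hφt.differentiable hone z).hasDerivAt
    have hdqz : HasDerivAt (fun w => pdz φ t w) qq' z := (hqt.differentiable hone z).hasDerivAt
    have hdnz : HasDerivAt (fun w =>
        φ t w * pdz (pdt (pdt φ)) t w - pdt (pdt φ) t w * pdz φ t w) n' z := by
      have hdiff : Differentiable ℝ (fun w =>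
          φ t w * pdz (pdt (pdt φ)) t w - pdt (pdt φ) t w * pdz φ t w) :=
        ((hφt.differentiable hone).mul (hA3t.differentiable hone)).sub
          ((hA2t.differentiable hone).mul (hqt.differentiable hone))
      exact (hdiff z).hasDerivAt
    -- derivative of the denominator of ω
    set F0 := deriv (fun w => ν w ξ υ) z with hF0def
    set Fval := ((cq u1 v11 v21 w1 ξ υ)^2 - cq u2 v12 v22 w2 ξ υ * S z ξ υ) / (S z ξ υ)^2
      with hFvaldef
    have hdDen : HasDerivAt
        (fun z' => 3 * φ t z' * (pdz φ t z' + φ t z' * deriv (fun w => ν w ξ υ) z'))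
        (3*qq*(qq + p*F0) + 3*p*(qq' + (qq*F0 + p*Fval))) z := by
      have h := ((hdφz.const_mul (3:ℝ)).mul (hdqz.add (hdφz.mul hdF)))
      exact h.congr_deriv (by simp only [Pi.add_apply, Pi.mul_apply, hp, hF0def]; ring)
    have hDenne : 3 * φ t z * (pdz φ t z + φ t z * deriv (fun w => ν w ξ υ) z) ≠ 0 :=
      mul_ne_zero (mul_ne_zero three_ne_zero hp0) (hden t z ξ υ hbox')
    -- differentiate ω in z and use ∂_z ω = 0
    have hωfun : (fun z' => ω t z' ξ υ) = fun z' =>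
        (φ t z' * pdz (pdt (pdt φ)) t z' - pdt (pdt φ) t z' * pdz φ t z') /
          (3 * φ t z' * (pdz φ t z' + φ t z' * deriv (fun w => ν w ξ υ) z')) :=
      funext fun z' => hω t z' ξ υ
    have hω0' : deriv (fun z' =>
        (φ t z' * pdz (pdt (pdt φ)) t z' - pdt (pdt φ) t z' * pdz φ t z') /
          (3 * φ t z' * (pdz φ t z' + φ t z' * deriv (fun w => ν w ξ υ) z'))) z = 0 := by
      rw [← hωfun]
      exact hωz t z ξ υ hbox'
    have hdω := hdnz.div hdDen hDenne
    have hfrac : (n' * (3 * φ t z * (pdz φ t z + φ t z * deriv (fun w => ν w ξ υ) z)) -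
        (φ t z * pdz (pdt (pdt φ)) t z - pdt (pdt φ) t z * pdz φ t z) *
          (3*qq*(qq + p*F0) + 3*p*(qq' + (qq*F0 + p*Fval)))) /
        (3 * φ t z * (pdz φ t z + φ t z * deriv (fun w => ν w ξ υ) z))^2 = 0 :=
      hdω.deriv.symm.trans hω0'
    have hE0 : n' * (3 * φ t z * (pdz φ t z + φ t z * deriv (fun w => ν w ξ υ) z)) -
        (φ t z * pdz (pdt (pdt φ)) t z - pdt (pdt φ) t z * pdz φ t z) *
          (3*qq*(qq + p*F0) + 3*p*(qq' + (qq*F0 + p*Fval))) = 0 := by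
      have hsq : (3 * φ t z * (pdz φ t z + φ t z * deriv (fun w => ν w ξ υ) z))^2 ≠ 0 :=
        pow_ne_zero 2 hDenne
      exact (div_eq_zero_iff.mp hfrac).resolve_right hsq
    -- convert to the clean algebraic form
    have hE : n' * (3*p*(qq + p*F0)) - (p * A3v - A2v * qq) *
        (3*qq*(qq + p*F0) + 3*p*(qq' + (qq*F0 + p*Fval))) = 0 := by
      linear_combination hE0
    have hF0eq : F0 = -(cq u1 v11 v21 w1 ξ υ / S z ξ υ) := by
      rw [hF0def]
      have := hνd z hz ξ hξ υ hυ
      rw [hu1, hv11, hv21, hw1]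
      exact this
    have halg := keyalg (n := p * A3v - A2v * qq) (n' := n') (p := p) (q := qq) (q' := qq')
      hnne hp0 hPvne hE hF0eq hFvaldef
    rw [← hcdS] at halg
    calc (p * A3v - A2v * qq) * p ^ 2 * cq u1 v11 v21 w1 ξ υ ^ 2
        = ((p * A3v - A2v * qq) * p ^ 2) * cq u1 v11 v21 w1 ξ υ ^ 2 := by ring
      _ = cq (U z) (V₁ z) (V₂ z) (W z) ξ υ * _ := halg
      _ = _ := by unfold cq; ring
  -- apply the rectangle argument
  obtain ⟨hm, hmt⟩ := stepE hc0 hx hy hkey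
  have hSne : cq (U z) (V₁ z) (V₂ z) (W z) x y ≠ 0 := by
    have : cq (U z) (V₁ z) (V₂ z) (W z) x y = S z x y := by rw [hS]; rfl
    rw [this]
    exact ne_of_gt (hSpos t z x y hbox0)
  constructor
  · have heqx : (fun ξ => deriv (fun w => ν w ξ y) z) =ᶠ[nhds x]
        (fun ξ => -(cq (deriv U z) (deriv V₁ z) (deriv V₂ z) (deriv W z) ξ y /
          cq (U z) (V₁ z) (V₂ z) (W z) ξ y)) := by
      filter_upwards [Ioo_mem_nhds hx.1 hx.2] with ξ hξ
      rw [hνd z hz ξ hξ y hy, hS]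
      rfl
    have hd1 := cq_hasDerivAt_x (deriv U z) (deriv V₁ z) (deriv V₂ z) (deriv W z) y x
    have hd2 := cq_hasDerivAt_x (U z) (V₁ z) (V₂ z) (W z) y x
    have hdq : HasDerivAt (fun ξ => -(cq (deriv U z) (deriv V₁ z) (deriv V₂ z) (deriv W z) ξ y /
        cq (U z) (V₁ z) (V₂ z) (W z) ξ y)) _ x := (hd1.div hd2 hSne).neg
    rw [heqx.deriv_eq, hdq.deriv]
    have hnum : (deriv U z * x + deriv V₁ z) * cq (U z) (V₁ z) (V₂ z) (W z) x y -
        cq (deriv U z) (deriv V₁ z) (deriv V₂ z) (deriv W z) x y * (U z * x + V₁ z) = 0 := by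
      linear_combination hm
    rw [hnum, zero_div, neg_zero]
  · have heqy : (fun υ => deriv (fun w => ν w x υ) z) =ᶠ[nhds y]
        (fun υ => -(cq (deriv U z) (deriv V₁ z) (deriv V₂ z) (deriv W z) x υ /
          cq (U z) (V₁ z) (V₂ z) (W z) x υ)) := by
      filter_upwards [Ioo_mem_nhds hy.1 hy.2] with υ hυ
      rw [hνd z hz x hx υ hυ, hS]
      rfl
    have hd1 := cq_hasDerivAt_y (deriv U z) (deriv V₁ z) (deriv V₂ z) (deriv W z) x y
    have hd2 := cq_hasDerivAt_y (U z) (V₁ z) (V₂ z) (W z) x y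
    have hdq : HasDerivAt (fun υ => -(cq (deriv U z) (deriv V₁ z) (deriv V₂ z) (deriv W z) x υ /
        cq (U z) (V₁ z) (V₂ z) (W z) x υ)) _ y := (hd1.div hd2 hSne).neg
    rw [heqy.deriv_eq, hdq.deriv]
    have hnum : (deriv U z * y + deriv V₂ z) * cq (U z) (V₁ z) (V₂ z) (W z) x y -
        cq (deriv U z) (deriv V₁ z) (deriv V₂ z) (deriv W z) x y * (U z * y + V₂ z) = 0 := by
      linear_combination hmt
    rw [hnum, zero_div, neg_zero]
end

section
/- Assume on the open box B that S > 0, φ > 0, and ∂_zF ≠ 0 where F = (∂_t²φ)/φ (the strict Szekeres–Szafron case, ω ≠ 0). Define Q = -∂_zν·[∂_z²F/∂_zF + 6·∂_zφ/φ] - 3(∂_zν)² + [∂_z²φ/φ - (∂_zφ/φ)·(∂_z²F/∂_zF) - 4(∂_zφ/φ)²]. If ∂_tQ = 0 at every point of B, then ∂_x∂_zν = 0 and ∂_y∂_zν = 0 at every point of B. -/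
open Filter

noncomputable def Dt (X : ℝ × ℝ → ℝ) : ℝ × ℝ → ℝ := fun q => fderiv ℝ X q (1, 0)
noncomputable def Dz (X : ℝ × ℝ → ℝ) : ℝ × ℝ → ℝ := fun q => fderiv ℝ X q (0, 1)

lemma hdDt {X : ℝ × ℝ → ℝ} (hX : ContDiff ℝ (⊤ : ℕ∞) X) (t z : ℝ) :
    HasDerivAt (fun s => X (s, z)) (Dt X (t, z)) t := by
  have h1 : HasFDerivAt X (fderiv ℝ X (t, z)) (t, z) :=
    (hX.differentiable (by simp) (t, z)).hasFDerivAt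
  have h2 : HasDerivAt (fun s : ℝ => ((s, z) : ℝ × ℝ)) ((1 : ℝ), (0 : ℝ)) t :=
    (hasDerivAt_id t).prodMk (hasDerivAt_const t z)
  exact h1.comp_hasDerivAt t h2

lemma hdDz {X : ℝ × ℝ → ℝ} (hX : ContDiff ℝ (⊤ : ℕ∞) X) (t z : ℝ) :
    HasDerivAt (fun w => X (t, w)) (Dz X (t, z)) z := by
  have h1 : HasFDerivAt X (fderiv ℝ X (t, z)) (t, z) :=
    (hX.differentiable (by simp) (t, z)).hasFDerivAt
  have h2 : HasDerivAt (fun w : ℝ => ((t, w) : ℝ × ℝ)) ((0 : ℝ), (1 : ℝ)) z :=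
    (hasDerivAt_const z t).prodMk (hasDerivAt_id z)
  exact h1.comp_hasDerivAt z h2

lemma cDt {X : ℝ × ℝ → ℝ} (hX : ContDiff ℝ (⊤ : ℕ∞) X) : ContDiff ℝ (⊤ : ℕ∞) (Dt X) :=
  (hX.fderiv_right (by simp)).clm_apply contDiff_const

lemma cDz {X : ℝ × ℝ → ℝ} (hX : ContDiff ℝ (⊤ : ℕ∞) X) : ContDiff ℝ (⊤ : ℕ∞) (Dz X) :=
  (hX.fderiv_right (by simp)).clm_apply contDiff_const

lemma Dcomm {X : ℝ × ℝ → ℝ} (hX : ContDiff ℝ (⊤ : ℕ∞) X) (q : ℝ × ℝ) :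
    Dz (Dt X) q = Dt (Dz X) q := by
  have hd : DifferentiableAt ℝ (fderiv ℝ X) q :=
    ((hX.fderiv_right (m := (⊤ : ℕ∞)) (by simp)).differentiable (by simp)) q
  have h1 : ∀ (v w : ℝ × ℝ), fderiv ℝ (fun p => fderiv ℝ X p v) q w
      = fderiv ℝ (fderiv ℝ X) q w v := by
    intro v w
    rw [fderiv_clm_apply hd (differentiableAt_const v)]
    simp
  have hsymm : IsSymmSndFDerivAt ℝ X q :=
    hX.contDiffAt.isSymmSndFDerivAt (by simp only [minSmoothness_of_isRCLikeNormedField]; exact WithTop.coe_le_coe.mpr (le_top : (2:ℕ∞) ≤ ⊤))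
  show fderiv ℝ (fun p => fderiv ℝ X p (1, 0)) q (0, 1)
      = fderiv ℝ (fun p => fderiv ℝ X p (0, 1)) q (1, 0)
  rw [h1, h1]
  exact hsymm.eq _ _

lemma const_of_deriv0 {f : ℝ → ℝ} {A B : ℝ}
    (hf : ∀ s ∈ Set.Ioo A B, HasDerivAt f 0 s) {u v : ℝ}
    (hu : u ∈ Set.Ioo A B) (hv : v ∈ Set.Ioo A B) : f u = f v := by
  have h := Convex.norm_image_sub_le_of_norm_hasDerivWithin_le (C := 0) (f' := fun _ => (0:ℝ))
    (fun s hs => (hf s hs).hasDerivWithinAt) (fun s _ => by simp) (convex_Ioo A B) hv hu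
  simp only [zero_mul, norm_le_zero_iff, sub_eq_zero] at h
  exact h


noncomputable def GGex (f0 f1 f0dd f1dd : ℝ → ℝ) : ℝ → ℝ := fun u =>
  (f1dd u * f0 u - f0dd u * f1 u) / f0 u ^ 2

noncomputable def EEex (f0 f1 f2 f0dd f1dd f2dd : ℝ → ℝ) : ℝ → ℝ := fun u =>
  ((f2dd u * f0 u - f0dd u * f2 u) * f0 u ^ 2
    - (f1dd u * f0 u - f0dd u * f1 u) * (2 * f0 u * f1 u)) / f0 u ^ 4

noncomputable def Atil (f0 f1 f2 f0dd f1dd f2dd : ℝ → ℝ) : ℝ → ℝ := fun u =>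
  EEex f0 f1 f2 f0dd f1dd f2dd u / GGex f0 f1 f0dd f1dd u + 6 * f1 u / f0 u

noncomputable def Btil (f0 f1 f2 f0dd f1dd f2dd : ℝ → ℝ) : ℝ → ℝ := fun u =>
  f2 u / f0 u - f1 u / f0 u * (EEex f0 f1 f2 f0dd f1dd f2dd u / GGex f0 f1 f0dd f1dd u)
    - 4 * (f1 u / f0 u) ^ 2


theorem analytic_key (a₁ b₁ t : ℝ) (ht : t ∈ Set.Ioo a₁ b₁)
    (f0 f0d f0dd f1 f1d f1dd f2 f2d f2dd : ℝ → ℝ)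
    (h0 : ∀ u, HasDerivAt f0 (f0d u) u) (h0' : ∀ u, HasDerivAt f0d (f0dd u) u)
    (h1 : ∀ u, HasDerivAt f1 (f1d u) u) (h1' : ∀ u, HasDerivAt f1d (f1dd u) u)
    (h2 : ∀ u, HasDerivAt f2 (f2d u) u) (h2' : ∀ u, HasDerivAt f2d (f2dd u) u)
    (hd0 : ∀ u, DifferentiableAt ℝ f0dd u) (hd1 : ∀ u, DifferentiableAt ℝ f1dd u)
    (hd2 : ∀ u, DifferentiableAt ℝ f2dd u)
    (hf0pos : ∀ u ∈ Set.Ioo a₁ b₁, 0 < f0 u)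
    (hGGne : ∀ u ∈ Set.Ioo a₁ b₁, GGex f0 f1 f0dd f1dd u ≠ 0)
    (c c' : ℝ) (hcc : c' ≠ c)
    (hQ1 : ∀ s ∈ Set.Ioo a₁ b₁,
      deriv (fun u => -c * Atil f0 f1 f2 f0dd f1dd f2dd u - 3 * c ^ 2
        + Btil f0 f1 f2 f0dd f1dd f2dd u) s = 0)
    (hQ2 : ∀ s ∈ Set.Ioo a₁ b₁,
      deriv (fun u => -c' * Atil f0 f1 f2 f0dd f1dd f2dd u - 3 * c' ^ 2
        + Btil f0 f1 f2 f0dd f1dd f2dd u) s = 0) : False := by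
  have hne : ∀ u ∈ Set.Ioo a₁ b₁, f0 u ≠ 0 := fun u hu => (hf0pos u hu).ne'
  have hnumne : ∀ u ∈ Set.Ioo a₁ b₁, f1dd u * f0 u - f0dd u * f1 u ≠ 0 := by
    intro u hu h
    apply hGGne u hu
    simp only [GGex, h, zero_div]
  -- differentiability on the interval
  have hdEE : ∀ u ∈ Set.Ioo a₁ b₁, DifferentiableAt ℝ (EEex f0 f1 f2 f0dd f1dd f2dd) u := by
    intro u hu
    have d0 := (h0 u).differentiableAt
    have d1 := (h1 u).differentiableAt
    have d2 := (h2 u).differentiableAt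
    unfold EEex
    exact (((((hd2 u).mul d0).sub ((hd0 u).mul d2)).mul (d0.pow 2)).sub
      ((((hd1 u).mul d0).sub ((hd0 u).mul d1)).mul
        (((differentiableAt_const (2:ℝ)).mul d0).mul d1))).div (d0.pow 4)
      (pow_ne_zero 4 (hne u hu))
  have hdGG : ∀ u ∈ Set.Ioo a₁ b₁, DifferentiableAt ℝ (GGex f0 f1 f0dd f1dd) u := by
    intro u hu
    have d0 := (h0 u).differentiableAt
    have d1 := (h1 u).differentiableAt
    unfold GGex
    exact (((hd1 u).mul d0).sub ((hd0 u).mul d1)).div (d0.pow 2) (pow_ne_zero 2 (hne u hu))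
  have hdA : ∀ u ∈ Set.Ioo a₁ b₁, DifferentiableAt ℝ (Atil f0 f1 f2 f0dd f1dd f2dd) u := by
    intro u hu
    have d0 := (h0 u).differentiableAt
    have d1 := (h1 u).differentiableAt
    unfold Atil
    exact ((hdEE u hu).div (hdGG u hu) (hGGne u hu)).add
      ((d1.const_mul 6).div d0 (hne u hu))
  have hdB : ∀ u ∈ Set.Ioo a₁ b₁, DifferentiableAt ℝ (Btil f0 f1 f2 f0dd f1dd f2dd) u := by
    intro u hu
    have d0 := (h0 u).differentiableAt
    have d1 := (h1 u).differentiableAt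
    have d2 := (h2 u).differentiableAt
    unfold Btil
    exact ((d2.div d0 (hne u hu)).sub ((d1.div d0 (hne u hu)).mul
      ((hdEE u hu).div (hdGG u hu) (hGGne u hu)))).sub
      (((d1.div d0 (hne u hu)).pow 2).const_mul 4)
  -- the t-derivatives of A and B vanish on the interval
  have hderiv : ∀ s ∈ Set.Ioo a₁ b₁, deriv (Atil f0 f1 f2 f0dd f1dd f2dd) s = 0 ∧
      deriv (Btil f0 f1 f2 f0dd f1dd f2dd) s = 0 := by
    intro s hs
    have e1 : ∀ e : ℝ, deriv (fun u => -e * Atil f0 f1 f2 f0dd f1dd f2dd u - 3 * e ^ 2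
        + Btil f0 f1 f2 f0dd f1dd f2dd u) s
        = -e * deriv (Atil f0 f1 f2 f0dd f1dd f2dd) s
          + deriv (Btil f0 f1 f2 f0dd f1dd f2dd) s := by
      intro e
      exact ((((hdA s hs).hasDerivAt.const_mul (-e)).sub_const (3 * e ^ 2)).add
        (hdB s hs).hasDerivAt).deriv
    have q1 := hQ1 s hs
    have q2 := hQ2 s hs
    rw [e1 c] at q1
    rw [e1 c'] at q2
    have hA0 : deriv (Atil f0 f1 f2 f0dd f1dd f2dd) s = 0 := by
      have h3 : (c' - c) * deriv (Atil f0 f1 f2 f0dd f1dd f2dd) s = 0 := by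
        linear_combination q1 - q2
      rcases mul_eq_zero.mp h3 with h | h
      · exact absurd (sub_eq_zero.mp h) hcc
      · exact h
    refine ⟨hA0, ?_⟩
    linear_combination q1 + c * hA0
  -- constancy
  set a := Atil f0 f1 f2 f0dd f1dd f2dd t with ha
  set b := Btil f0 f1 f2 f0dd f1dd f2dd t with hb
  have hAc : ∀ s ∈ Set.Ioo a₁ b₁, Atil f0 f1 f2 f0dd f1dd f2dd s = a := by
    intro s hs
    exact const_of_deriv0 (fun u hu => (hderiv u hu).1 ▸ (hdA u hu).hasDerivAt) hs ht
  have hBc : ∀ s ∈ Set.Ioo a₁ b₁, Btil f0 f1 f2 f0dd f1dd f2dd s = b := by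
    intro s hs
    exact const_of_deriv0 (fun u hu => (hderiv u hu).2 ▸ (hdB u hu).hasDerivAt) hs ht
  -- pointwise polynomial relations
  have hkey : ∀ s ∈ Set.Ioo a₁ b₁,
      EEex f0 f1 f2 f0dd f1dd f2dd s = (a - 6 * f1 s / f0 s) * GGex f0 f1 f0dd f1dd s := by
    intro s hs
    have hAs := hAc s hs
    unfold Atil at hAs
    have h5 : EEex f0 f1 f2 f0dd f1dd f2dd s / GGex f0 f1 f0dd f1dd s
        = a - 6 * f1 s / f0 s := by linear_combination hAs
    rw [← h5, div_mul_cancel₀ _ (hGGne s hs)]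
  have hEA : ∀ s ∈ Set.Ioo a₁ b₁,
      (f2dd s * f0 s - f0dd s * f2 s) * f0 s ^ 2
        - (f1dd s * f0 s - f0dd s * f1 s) * (2 * f0 s * f1 s)
      = a * f0 s ^ 2 * (f1dd s * f0 s - f0dd s * f1 s)
        - 6 * f0 s * f1 s * (f1dd s * f0 s - f0dd s * f1 s) := by
    intro s hs
    have h := hkey s hs
    unfold EEex GGex at h
    field_simp [hne s hs] at h
    have h6 : ((f2dd s * f0 s - f0dd s * f2 s) * f0 s ^ 2
        - (f1dd s * f0 s - f0dd s * f1 s) * (2 * f0 s * f1 s)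
        - (a * f0 s ^ 2 * (f1dd s * f0 s - f0dd s * f1 s)
          - 6 * f0 s * f1 s * (f1dd s * f0 s - f0dd s * f1 s))) * f0 s ^ 3 = 0 := by
      linear_combination f0 s ^ 4 * h
    have h7 := (mul_eq_zero.mp h6).resolve_right (pow_ne_zero 3 (hne s hs))
    linarith
  have hR0 : ∀ s ∈ Set.Ioo a₁ b₁,
      f2 s * f0 s + 2 * f1 s ^ 2 - a * (f1 s * f0 s) - b * f0 s ^ 2 = 0 := by
    intro s hs
    have hBs := hBc s hs
    unfold Btil at hBs
    have h5 : EEex f0 f1 f2 f0dd f1dd f2dd s / GGex f0 f1 f0dd f1dd s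
        = a - 6 * f1 s / f0 s := by
      rw [hkey s hs, mul_div_assoc, div_self (hGGne s hs), mul_one]
    rw [h5] at hBs
    field_simp [hne s hs] at hBs
    have h6 : (f2 s * f0 s + 2 * f1 s ^ 2 - a * (f1 s * f0 s) - b * f0 s ^ 2) * f0 s ^ 3 = 0 := by
      linear_combination f0 s ^ 3 * hBs
    exact (mul_eq_zero.mp h6).resolve_right (pow_ne_zero 3 (hne s hs))
  -- differentiate hR0 once
  have hg' : ∀ u, HasDerivAt
      (fun v => f2 v * f0 v + 2 * f1 v ^ 2 - a * (f1 v * f0 v) - b * f0 v ^ 2)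
      (f2d u * f0 u + f2 u * f0d u + 4 * f1 u * f1d u
        - a * (f1d u * f0 u + f1 u * f0d u) - b * (2 * f0 u * f0d u)) u := by
    intro u
    have h := ((((h2 u).mul (h0 u)).add (((h1 u).pow 2).const_mul 2)).sub
      (((h1 u).mul (h0 u)).const_mul a)).sub (((h0 u).pow 2).const_mul b)
    refine h.congr_deriv ?_
    push_cast
    ring
  have hR1 : ∀ s ∈ Set.Ioo a₁ b₁,
      f2d s * f0 s + f2 s * f0d s + 4 * f1 s * f1d s
        - a * (f1d s * f0 s + f1 s * f0d s) - b * (2 * f0 s * f0d s) = 0 := by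
    intro s hs
    rw [← (hg' s).deriv]
    have hev : (fun v => f2 v * f0 v + 2 * f1 v ^ 2 - a * (f1 v * f0 v) - b * f0 v ^ 2)
        =ᶠ[nhds s] (fun _ => (0:ℝ)) := by
      filter_upwards [isOpen_Ioo.mem_nhds hs] with u hu using hR0 u hu
    rw [hev.deriv_eq, deriv_const]
    -- differentiate again
  have hg'' : ∀ u, HasDerivAt
      (fun v => f2d v * f0 v + f2 v * f0d v + 4 * f1 v * f1d v
        - a * (f1d v * f0 v + f1 v * f0d v) - b * (2 * f0 v * f0d v))
      (f2dd u * f0 u + 2 * f2d u * f0d u + f2 u * f0dd u + 4 * f1d u ^ 2 + 4 * f1 u * f1dd u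
        - a * (f1dd u * f0 u + 2 * f1d u * f0d u + f1 u * f0dd u)
        - b * (2 * (f0d u ^ 2 + f0 u * f0dd u))) u := by
    intro u
    have h := (((((h2' u).mul (h0 u)).add ((h2 u).mul (h0' u))).add
        (((h1 u).const_mul 4).mul (h1' u))).sub
       ((((h1' u).mul (h0 u)).add ((h1 u).mul (h0' u))).const_mul a)).sub
      ((((h0 u).const_mul 2).mul (h0' u)).const_mul b)
    refine h.congr_deriv ?_
    ring
  have hR2 : ∀ s ∈ Set.Ioo a₁ b₁,
      f2dd s * f0 s + 2 * f2d s * f0d s + f2 s * f0dd s + 4 * f1d s ^ 2 + 4 * f1 s * f1dd s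
        - a * (f1dd s * f0 s + 2 * f1d s * f0d s + f1 s * f0dd s)
        - b * (2 * (f0d s ^ 2 + f0 s * f0dd s)) = 0 := by
    intro s hs
    rw [← (hg'' s).deriv]
    have hev : (fun v => f2d v * f0 v + f2 v * f0d v + 4 * f1 v * f1d v
        - a * (f1d v * f0 v + f1 v * f0d v) - b * (2 * f0 v * f0d v))
        =ᶠ[nhds s] (fun _ => (0:ℝ)) := by
      filter_upwards [isOpen_Ioo.mem_nhds hs] with u hu using hR1 u hu
    rw [hev.deriv_eq, deriv_const]
  -- key algebraic identity forces (f1' f0 - f0' f1)^2 = 0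
  have hlin : ∀ s ∈ Set.Ioo a₁ b₁, f1d s * f0 s - f0d s * f1 s = 0 := by
    intro s hs
    have hsq : (f1d s * f0 s - f0d s * f1 s) ^ 2 = 0 := by
      linear_combination (-(1:ℝ)/4) * hEA s hs + (f0 s ^ 2 / 4) * hR2 s hs
        - (f0 s * f0d s / 2) * hR1 s hs
        - ((2 * f0 s * f0dd s - 2 * f0d s ^ 2) / 4) * hR0 s hs
    exact pow_eq_zero_iff two_ne_zero |>.mp hsq
  -- hence f1/f0 is constant
  have hp0 : ∀ s ∈ Set.Ioo a₁ b₁, HasDerivAt (fun u => f1 u / f0 u) 0 s := by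
    intro s hs
    have h := (h1 s).div (h0 s) (hne s hs)
    have h2v : (f1d s * f0 s - f1 s * f0d s) / f0 s ^ 2 = 0 := by
      rw [div_eq_zero_iff]
      left
      linear_combination hlin s hs
    rwa [h2v] at h
  have hpc : ∀ s ∈ Set.Ioo a₁ b₁, f1 s / f0 s = f1 t / f0 t :=
    fun s hs => const_of_deriv0 hp0 hs ht
  set c0 := f1 t / f0 t with hc0
  have hf1e : ∀ s ∈ Set.Ioo a₁ b₁, f1 s - c0 * f0 s = 0 := by
    intro s hs
    have h := (div_eq_iff (hne s hs)).mp (hpc s hs)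
    linarith
  have hf1d : ∀ s ∈ Set.Ioo a₁ b₁, f1d s - c0 * f0d s = 0 := by
    intro s hs
    have hq := (h1 s).sub ((h0 s).const_mul c0)
    rw [← hq.deriv]
    show deriv (fun v => f1 v - c0 * f0 v) s = 0
    have hev : (fun v => f1 v - c0 * f0 v) =ᶠ[nhds s] (fun _ => (0:ℝ)) := by
      filter_upwards [isOpen_Ioo.mem_nhds hs] with u hu using hf1e u hu
    rw [hev.deriv_eq, deriv_const]
  have hf1dd : f1dd t - c0 * f0dd t = 0 := by
    have hq := (h1' t).sub ((h0' t).const_mul c0)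
    rw [← hq.deriv]
    show deriv (fun v => f1d v - c0 * f0d v) t = 0
    have hev : (fun v => f1d v - c0 * f0d v) =ᶠ[nhds t] (fun _ => (0:ℝ)) := by
      filter_upwards [isOpen_Ioo.mem_nhds ht] with u hu using hf1d u hu
    rw [hev.deriv_eq, deriv_const]
  apply hnumne t ht
  have e1 : f1 t = c0 * f0 t := by have := hf1e t ht; linarith
  have e2 : f1dd t = c0 * f0dd t := by linarith
  rw [e1, e2]
  ring



theorem stmt_12 (a₁ b₁ a₂ b₂ a₃ b₃ a₄ b₄ : ℝ)
    (φ : ℝ → ℝ → ℝ) (U V₁ V₂ W : ℝ → ℝ)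
    -- smoothness of the class I Szekeres–Szafron data
    (hφ : ContDiff ℝ (⊤ : ℕ∞) (fun q : ℝ × ℝ => φ q.1 q.2))
    (hU : ContDiff ℝ (⊤ : ℕ∞) U) (hV₁ : ContDiff ℝ (⊤ : ℕ∞) V₁)
    (hV₂ : ContDiff ℝ (⊤ : ℕ∞) V₂) (hW : ContDiff ℝ (⊤ : ℕ∞) W)
    -- S(z,x,y) = ½U(z)(x²+y²) + V₁(z)x + V₂(z)y + 2W(z), ν = -ln S
    (S ν : ℝ → ℝ → ℝ → ℝ)
    (hS : ∀ z x y, S z x y =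
      (1 / 2) * U z * (x ^ 2 + y ^ 2) + V₁ z * x + V₂ z * y + 2 * W z)
    (hν : ∀ z x y, ν z x y = -Real.log (S z x y))
    -- ∂_z ν
    (νz : ℝ → ℝ → ℝ → ℝ) (hνz : ∀ z x y, νz z x y = deriv (fun w => ν w x y) z)
    -- F = (∂_t²φ)/φ
    (F : ℝ → ℝ → ℝ) (hF : ∀ t z, F t z = pdt (pdt φ) t z / φ t z)
    -- the invariant Q
    (Q : ℝ → ℝ → ℝ → ℝ → ℝ)
    (hQ : ∀ t z x y, Q t z x y =
      -νz z x y * (pdz (pdz F) t z / pdz F t z + 6 * pdz φ t z / φ t z)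
        - 3 * (νz z x y) ^ 2
        + (pdz (pdz φ) t z / φ t z
          - (pdz φ t z / φ t z) * (pdz (pdz F) t z / pdz F t z)
          - 4 * (pdz φ t z / φ t z) ^ 2))
    -- strictness assumptions on the box
    (hSpos : ∀ t z x y, inBox a₁ b₁ a₂ b₂ a₃ b₃ a₄ b₄ t z x y → 0 < S z x y)
    (hφpos : ∀ t z x y, inBox a₁ b₁ a₂ b₂ a₃ b₃ a₄ b₄ t z x y → 0 < φ t z)
    (hFz : ∀ t z x y, inBox a₁ b₁ a₂ b₂ a₃ b₃ a₄ b₄ t z x y → pdz F t z ≠ 0)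
    -- ∂_t Q = 0 at every point of the box
    (hQt : ∀ t z x y, inBox a₁ b₁ a₂ b₂ a₃ b₃ a₄ b₄ t z x y →
      deriv (fun s => Q s z x y) t = 0) :
    ∀ t z x y, inBox a₁ b₁ a₂ b₂ a₃ b₃ a₄ b₄ t z x y →
      deriv (fun ξ => deriv (fun w => ν w ξ y) z) x = 0 ∧
      deriv (fun υ => deriv (fun w => ν w x υ) z) y = 0 := by
  intro t z x y hbox
  obtain ⟨ht, hz, hx, hy⟩ := hbox
  set Φ : ℝ × ℝ → ℝ := fun q : ℝ × ℝ => φ q.1 q.2 with hΦ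
  have cφ : ContDiff ℝ (⊤ : ℕ∞) Φ := hφ
  have ct := cDt cφ
  have ctt := cDt ct
  have cz := cDz cφ
  have czz := cDz cz
  have ctz := cDt cz
  have ctzz := cDt czz
  have hφΦ : ∀ u w, φ u w = Φ (u, w) := fun _ _ => rfl
  have hpdt : ∀ s w, pdt φ s w = Dt Φ (s, w) := by
    intro s w; unfold pdt; exact (hdDt cφ s w).deriv
  have hpdtt : ∀ s w, pdt (pdt φ) s w = Dt (Dt Φ) (s, w) := by
    intro s w
    unfold pdt
    have he : (fun u => deriv (fun s' => φ s' w) u) = (fun u => Dt Φ (u, w)) := by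
      funext u; exact (hdDt cφ u w).deriv
    rw [he]
    exact (hdDt ct s w).deriv
  have hpdz : ∀ s w, pdz φ s w = Dz Φ (s, w) := by
    intro s w; unfold pdz; exact (hdDz cφ s w).deriv
  have hpdzz : ∀ s w, pdz (pdz φ) s w = Dz (Dz Φ) (s, w) := by
    intro s w
    unfold pdz
    have he : (fun u => deriv (fun w' => φ s w') u) = (fun u => Dz Φ (s, u)) := by
      funext u; exact (hdDz cφ s u).deriv
    rw [he]
    exact (hdDz cz s w).deriv
  have hpos : ∀ s ∈ Set.Ioo a₁ b₁, ∀ w ∈ Set.Ioo a₂ b₂, 0 < Φ (s, w) :=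
    fun s hs w hw => hφpos s w x y ⟨hs, hw, hx, hy⟩
  have comm1 : ∀ q, Dz (Dt (Dt Φ)) q = Dt (Dt (Dz Φ)) q := by
    intro q
    rw [Dcomm ct q]
    have e2 : Dz (Dt Φ) = Dt (Dz Φ) := funext (Dcomm cφ)
    rw [e2]
  have comm2 : ∀ q, Dz (Dz (Dt (Dt Φ))) q = Dt (Dt (Dz (Dz Φ))) q := by
    intro q
    have e0 : Dz (Dt (Dt Φ)) = Dt (Dt (Dz Φ)) := funext comm1
    rw [e0, Dcomm (cDt cz) q]
    have e2 : Dz (Dt (Dz Φ)) = Dt (Dz (Dz Φ)) := funext (Dcomm cz)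
    rw [e2]
  have hFq : ∀ s, (fun w' => F s w') = fun w' => Dt (Dt Φ) (s, w') / Φ (s, w') := by
    intro s; funext w'; rw [hF, hpdtt]
  have hGf : ∀ s ∈ Set.Ioo a₁ b₁, ∀ w ∈ Set.Ioo a₂ b₂, pdz F s w
      = (Dz (Dt (Dt Φ)) (s, w) * Φ (s, w) - Dt (Dt Φ) (s, w) * Dz Φ (s, w)) / Φ (s, w) ^ 2 := by
    intro s hs w hw
    have hdiv := (hdDz ctt s w).div (hdDz cφ s w) (hpos s hs w hw).ne'
    unfold pdz
    rw [hFq s]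
    exact hdiv.deriv
  have hGG : ∀ s ∈ Set.Ioo a₁ b₁, pdz F s z = GGex (fun u => Φ (u, z)) (fun u => Dz Φ (u, z))
      (fun u => Dt (Dt Φ) (u, z)) (fun u => Dt (Dt (Dz Φ)) (u, z)) s := by
    intro s hs
    rw [hGf s hs z hz]
    simp only [GGex]
    rw [comm1 (s, z)]
  have hEE : ∀ s ∈ Set.Ioo a₁ b₁, pdz (pdz F) s z = EEex (fun u => Φ (u, z))
      (fun u => Dz Φ (u, z)) (fun u => Dz (Dz Φ) (u, z)) (fun u => Dt (Dt Φ) (u, z))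
      (fun u => Dt (Dt (Dz Φ)) (u, z)) (fun u => Dt (Dt (Dz (Dz Φ))) (u, z)) s := by
    intro s hs
    have hdiv := (((hdDz (cDz ctt) s z).mul (hdDz cφ s z)).sub
      ((hdDz ctt s z).mul (hdDz cz s z))).div ((hdDz cφ s z).pow 2)
      (pow_ne_zero 2 (hpos s hs z hz).ne')
    have hev : (fun w => pdz F s w) =ᶠ[nhds z] (fun w =>
        (Dz (Dt (Dt Φ)) (s, w) * Φ (s, w) - Dt (Dt Φ) (s, w) * Dz Φ (s, w)) / Φ (s, w) ^ 2) := by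
      filter_upwards [isOpen_Ioo.mem_nhds hz] with w hw using hGf s hs w hw
    have hdiv' := hdiv.congr_of_eventuallyEq hev
    show deriv (fun w => pdz F s w) z = _
    rw [hdiv'.deriv]
    simp only [EEex, Pi.pow_apply, Pi.mul_apply, Pi.sub_apply]
    rw [comm1 (s, z), comm2 (s, z)]
    push_cast
    ring
  -- the key reduction to analytic_key
  have key : ∀ x' y', x' ∈ Set.Ioo a₃ b₃ → y' ∈ Set.Ioo a₄ b₄ →
      νz z x' y' ≠ νz z x y → False := by
    intro x' y' hx' hy' hnecc
    have hQrw : ∀ (x₀ y₀ : ℝ), x₀ ∈ Set.Ioo a₃ b₃ → y₀ ∈ Set.Ioo a₄ b₄ → ∀ s ∈ Set.Ioo a₁ b₁,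
        deriv (fun u => -(νz z x₀ y₀) * Atil (fun u => Φ (u, z)) (fun u => Dz Φ (u, z))
          (fun u => Dz (Dz Φ) (u, z)) (fun u => Dt (Dt Φ) (u, z)) (fun u => Dt (Dt (Dz Φ)) (u, z))
          (fun u => Dt (Dt (Dz (Dz Φ))) (u, z)) u - 3 * (νz z x₀ y₀) ^ 2
          + Btil (fun u => Φ (u, z)) (fun u => Dz Φ (u, z)) (fun u => Dz (Dz Φ) (u, z))
          (fun u => Dt (Dt Φ) (u, z)) (fun u => Dt (Dt (Dz Φ)) (u, z))
          (fun u => Dt (Dt (Dz (Dz Φ))) (u, z)) u) s = 0 := by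
      intro x₀ y₀ hx₀ hy₀ s hs
      rw [← hQt s z x₀ y₀ ⟨hs, hz, hx₀, hy₀⟩]
      apply Filter.EventuallyEq.deriv_eq
      filter_upwards [isOpen_Ioo.mem_nhds hs] with u hu
      rw [hQ u z x₀ y₀, hpdz u z, hpdzz u z, hGG u hu, hEE u hu, hφΦ u z]
      simp only [Atil, Btil]
    exact analytic_key a₁ b₁ t ht (fun u => Φ (u, z)) (fun u => Dt Φ (u, z))
      (fun u => Dt (Dt Φ) (u, z)) (fun u => Dz Φ (u, z)) (fun u => Dt (Dz Φ) (u, z))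
      (fun u => Dt (Dt (Dz Φ)) (u, z)) (fun u => Dz (Dz Φ) (u, z))
      (fun u => Dt (Dz (Dz Φ)) (u, z)) (fun u => Dt (Dt (Dz (Dz Φ))) (u, z))
      (fun u => hdDt cφ u z) (fun u => hdDt ct u z)
      (fun u => hdDt cz u z) (fun u => hdDt ctz u z)
      (fun u => hdDt czz u z) (fun u => hdDt ctzz u z)
      (fun u => (hdDt (cDt ct) u z).differentiableAt)
      (fun u => (hdDt (cDt ctz) u z).differentiableAt)
      (fun u => (hdDt (cDt ctzz) u z).differentiableAt)
      (fun u hu => hpos u hu z hz)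
      (fun u hu => by rw [← hGG u hu]; exact hFz u z x y ⟨hu, hz, hx, hy⟩)
      (νz z x y) (νz z x' y') hnecc
      (hQrw x y hx hy) (hQrw x' y' hx' hy')
  constructor
  · have hfun : (fun ξ => deriv (fun w => ν w ξ y) z) = fun ξ => νz z ξ y := by
      funext ξ; rw [hνz]
    rw [hfun]
    by_contra hne0
    by_cases hall : ∀ ξ ∈ Set.Ioo a₃ b₃, νz z ξ y = νz z x y
    · apply hne0
      have hev : (fun ξ => νz z ξ y) =ᶠ[nhds x] (fun _ => νz z x y) := by
        filter_upwards [isOpen_Ioo.mem_nhds hx] with ξ hξ using hall ξ hξ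
      rw [hev.deriv_eq, deriv_const]
    · push_neg at hall
      obtain ⟨x', hx', hnecc⟩ := hall
      exact (key x' y hx' hy hnecc).elim
  · have hfun : (fun υ => deriv (fun w => ν w x υ) z) = fun υ => νz z x υ := by
      funext υ; rw [hνz]
    rw [hfun]
    by_contra hne0
    by_cases hall : ∀ υ ∈ Set.Ioo a₄ b₄, νz z x υ = νz z x y
    · apply hne0
      have hev : (fun υ => νz z x υ) =ᶠ[nhds y] (fun _ => νz z x y) := by
        filter_upwards [isOpen_Ioo.mem_nhds hy] with υ hυ using hall υ hυ
      rw [hev.deriv_eq, deriv_const]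
    · push_neg at hall
      obtain ⟨y', hy', hnecc⟩ := hall
      exact (key x y' hx hy' hnecc).elim
end

section
/- Let J ⊆ ℝ be an open interval, Ω ⊆ ℝ² a nonempty connected open set, and U, V₁, V₂, W smooth functions on J such that S(z,x,y) = ½U(z)(x²+y²) + V₁(z)x + V₂(z)y + 2W(z) > 0 for all (z,x,y) ∈ J×Ω. If ∂_z∂_x ln S = 0 and ∂_z∂_y ln S = 0 on J×Ω, then there exist a smooth positive function f on J and constants u₀, c₁, c₂, w₀ such that U = u₀·f, V₁ = c₁·f, V₂ = c₂·f, and W = w₀·f; equivalently S(z,x,y) = f(z)·C(x,y) with C(x,y) = ½u₀(x²+y²) + c₁x + c₂y + 2w₀. -/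
open Real

lemma szek_derivx (U V₁ V₂ W : ℝ → ℝ) (ζ x y : ℝ) :
    HasDerivAt (fun ξ => (1/2)*U ζ*(ξ^2+y^2) + V₁ ζ*ξ + V₂ ζ*y + 2*W ζ) (U ζ*x + V₁ ζ) x := by
  have h1 : HasDerivAt (fun ξ : ℝ => (1/2)*U ζ*(ξ^2+y^2)) ((1/2)*U ζ*(2*x)) x := by
    simpa using ((hasDerivAt_pow 2 x).add_const (y^2)).const_mul ((1/2)*U ζ)
  have h2 : HasDerivAt (fun ξ : ℝ => V₁ ζ*ξ) (V₁ ζ) x := by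
    simpa using (hasDerivAt_id x).const_mul (V₁ ζ)
  have h3 := ((h1.add h2).add_const (V₂ ζ*y)).add_const (2*W ζ)
  exact h3.congr_deriv (by ring)

lemma szek_derivy (U V₁ V₂ W : ℝ → ℝ) (ζ x y : ℝ) :
    HasDerivAt (fun υ => (1/2)*U ζ*(x^2+υ^2) + V₁ ζ*x + V₂ ζ*υ + 2*W ζ) (U ζ*y + V₂ ζ) y := by
  have h1 : HasDerivAt (fun υ : ℝ => (1/2)*U ζ*(x^2+υ^2)) ((1/2)*U ζ*(2*y)) y := by
    simpa using ((hasDerivAt_pow 2 y).const_add (x^2)).const_mul ((1/2)*U ζ)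
  have h2 : HasDerivAt (fun υ : ℝ => V₂ ζ*υ) (V₂ ζ) y := by
    simpa using (hasDerivAt_id y).const_mul (V₂ ζ)
  have h3 := (((h1.add_const (V₁ ζ*x)).add h2)).add_const (2*W ζ)
  exact h3.congr_deriv (by ring)

lemma szek_quad_vanish {a b c d x₀ y₀ ε : ℝ} (hε : 0 < ε)
    (h : ∀ x y : ℝ, max |x - x₀| |y - y₀| < ε →
      (1/2)*a*(x^2+y^2) + b*x + c*y + d = 0) :
    a = 0 ∧ b = 0 ∧ c = 0 ∧ d = 0 := by
  set δ := ε/2 with hδdef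
  have hδpos : 0 < δ := by positivity
  have hmem : ∀ s t : ℝ, |s| ≤ δ → |t| ≤ δ → max |x₀ + s - x₀| |y₀ + t - y₀| < ε := by
    intro s t hs ht
    have : x₀ + s - x₀ = s := by ring
    rw [this]
    have : y₀ + t - y₀ = t := by ring
    rw [this]
    have : δ < ε := by rw [hδdef]; linarith
    exact max_lt (lt_of_le_of_lt hs this) (lt_of_le_of_lt ht this)
  have hδa : |δ| ≤ δ := le_of_eq (abs_of_pos hδpos)
  have hδn : |(-δ)| ≤ δ := le_of_eq (by rw [abs_neg]; exact abs_of_pos hδpos)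
  have h0a : |(0:ℝ)| ≤ δ := by simp [le_of_lt hδpos]
  have e0 := h x₀ y₀ (by simpa using hmem 0 0 h0a h0a)
  have ep := h (x₀ + δ) y₀ (by simpa using hmem δ 0 hδa h0a)
  have em := h (x₀ - δ) y₀ (by simpa [sub_eq_add_neg] using hmem (-δ) 0 hδn h0a)
  have fp := h x₀ (y₀ + δ) (by simpa using hmem 0 δ h0a hδa)
  have fm := h x₀ (y₀ - δ) (by simpa [sub_eq_add_neg] using hmem 0 (-δ) h0a hδn)
  have ha : a * δ^2 = 0 := by linear_combination ep + em - 2*e0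
  have ha0 : a = 0 := by
    rcases mul_eq_zero.1 ha with h' | h'
    · exact h'
    · exact absurd h' (pow_ne_zero 2 hδpos.ne')
  rw [ha0] at e0 ep em fp fm
  have hb : b * (2*δ) = 0 := by linear_combination ep - em
  have hb0 : b = 0 := by
    rcases mul_eq_zero.1 hb with h' | h'
    · exact h'
    · exact absurd h' (by positivity)
  have hc : c * (2*δ) = 0 := by linear_combination fp - fm
  have hc0 : c = 0 := by
    rcases mul_eq_zero.1 hc with h' | h'
    · exact h'
    · exact absurd h' (by positivity)
  rw [hb0, hc0] at e0
  refine ⟨ha0, hb0, hc0, by linarith [e0]⟩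

theorem stmt_13 (J : Set ℝ) (hJopen : IsOpen J) (hJinterval : J.OrdConnected)
    (Ω : Set (ℝ × ℝ)) (hΩopen : IsOpen Ω) (hΩconn : IsConnected Ω)
    (U V₁ V₂ W : ℝ → ℝ)
    (hU : ContDiff ℝ (⊤ : ℕ∞) U) (hV₁ : ContDiff ℝ (⊤ : ℕ∞) V₁)
    (hV₂ : ContDiff ℝ (⊤ : ℕ∞) V₂) (hW : ContDiff ℝ (⊤ : ℕ∞) W)
    (S : ℝ → ℝ → ℝ → ℝ)
    (hS : ∀ z x y, S z x y =
      (1 / 2) * U z * (x ^ 2 + y ^ 2) + V₁ z * x + V₂ z * y + 2 * W z)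
    (hSpos : ∀ z ∈ J, ∀ x y, (x, y) ∈ Ω → 0 < S z x y)
    -- ∂_z∂_x ln S = 0 and ∂_z∂_y ln S = 0 on J × Ω
    (hzx : ∀ z ∈ J, ∀ x y, (x, y) ∈ Ω →
      deriv (fun ζ => deriv (fun ξ => Real.log (S ζ ξ y)) x) z = 0)
    (hzy : ∀ z ∈ J, ∀ x y, (x, y) ∈ Ω →
      deriv (fun ζ => deriv (fun υ => Real.log (S ζ x υ)) y) z = 0) :
    ∃ (f : ℝ → ℝ) (u₀ c₁ c₂ w₀ : ℝ),
      ContDiff ℝ (⊤ : ℕ∞) f ∧ (∀ z ∈ J, 0 < f z) ∧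
      (∀ z ∈ J, U z = u₀ * f z ∧ V₁ z = c₁ * f z ∧ V₂ z = c₂ * f z ∧
        W z = w₀ * f z) ∧
      (∀ z ∈ J, ∀ x y, (x, y) ∈ Ω →
        S z x y = f z * ((1 / 2) * u₀ * (x ^ 2 + y ^ 2) + c₁ * x + c₂ * y
          + 2 * w₀)) := by
  rcases J.eq_empty_or_nonempty with hJe | ⟨z₀, hz₀⟩
  · exact ⟨fun _ => 1, 0, 0, 0, 0, contDiff_const, by simp [hJe], by simp [hJe], by simp [hJe]⟩
  obtain ⟨⟨x₀, y₀⟩, hp₀⟩ := hΩconn.nonempty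
  have hJconv : Convex ℝ J := convex_iff_ordConnected.mpr hJinterval
  -- smoothness facts
  have hSz : ∀ x y : ℝ, (fun ζ => S ζ x y)
      = fun ζ => (1/2)*U ζ*(x^2+y^2) + V₁ ζ*x + V₂ ζ*y + 2*W ζ :=
    fun x y => funext fun ζ => hS ζ x y
  have contS : ∀ x y : ℝ, ContDiff ℝ (⊤ : ℕ∞) fun ζ => S ζ x y := by
    intro x y
    rw [hSz x y]
    exact ((((contDiff_const.mul hU).mul contDiff_const).add (hV₁.mul contDiff_const)).add
      (hV₂.mul contDiff_const)).add (contDiff_const.mul hW)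
  have contSp : ∀ z : ℝ, ContDiff ℝ (⊤ : ℕ∞) fun p : ℝ × ℝ => S z p.1 p.2 := by
    intro z
    have : (fun p : ℝ × ℝ => S z p.1 p.2)
        = fun p : ℝ × ℝ => (1/2)*U z*(p.1^2+p.2^2) + V₁ z*p.1 + V₂ z*p.2 + 2*W z :=
      funext fun p => hS z p.1 p.2
    rw [this]
    exact (((contDiff_const.mul ((contDiff_fst.pow 2).add (contDiff_snd.pow 2))).add
      (contDiff_const.mul contDiff_fst)).add (contDiff_const.mul contDiff_snd)).add contDiff_const
  have hSderivx : ∀ ζ x y : ℝ, HasDerivAt (fun ξ => S ζ ξ y) (U ζ*x + V₁ ζ) x := by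
    intro ζ x y
    have h := szek_derivx U V₁ V₂ W ζ x y
    have he : (fun ξ => (1/2)*U ζ*(ξ^2+y^2) + V₁ ζ*ξ + V₂ ζ*y + 2*W ζ)
        = fun ξ => S ζ ξ y := funext fun ξ => (hS ζ ξ y).symm
    rwa [he] at h
  have hSderivy : ∀ ζ x y : ℝ, HasDerivAt (fun υ => S ζ x υ) (U ζ*y + V₂ ζ) y := by
    intro ζ x y
    have h := szek_derivy U V₁ V₂ W ζ x y
    have he : (fun υ => (1/2)*U ζ*(x^2+υ^2) + V₁ ζ*x + V₂ ζ*υ + 2*W ζ)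
        = fun υ => S ζ x υ := funext fun υ => (hS ζ x υ).symm
    rwa [he] at h
  -- Step A: the log-partials are independent of z on J
  have hA : ∀ x y : ℝ, (x, y) ∈ Ω → ∀ z ∈ J,
      (U z*x + V₁ z)/S z x y = (U z₀*x + V₁ z₀)/S z₀ x y := by
    intro x y hxy
    have hdiff : ∀ z ∈ J, DifferentiableAt ℝ (fun ζ => (U ζ*x + V₁ ζ)/S ζ x y) z := by
      intro z hz
      exact (((hU.differentiable (by simp) z).mul_const x).add
        (hV₁.differentiable (by simp) z)).div ((contS x y).differentiable (by simp) z)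
        (hSpos z hz x y hxy).ne'
    have hd0 : ∀ z ∈ J, HasDerivAt (fun ζ => (U ζ*x + V₁ ζ)/S ζ x y) 0 z := by
      intro z hz
      have hpos := hSpos z hz x y hxy
      have hev : ∀ᶠ ζ in nhds z, 0 < S ζ x y := by
        have hmem : (fun ζ => S ζ x y) ⁻¹' Set.Ioi 0 ∈ nhds z :=
          (contS x y).continuous.continuousAt.preimage_mem_nhds (Ioi_mem_nhds hpos)
        filter_upwards [hmem] with ζ hζ using hζ
      have heq : (fun ζ => deriv (fun ξ => Real.log (S ζ ξ y)) x)
          =ᶠ[nhds z] fun ζ => (U ζ*x + V₁ ζ)/S ζ x y := by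
        filter_upwards [hev] with ζ hζ
        exact ((hSderivx ζ x y).log hζ.ne').deriv
      have h1 : deriv (fun ζ => (U ζ*x + V₁ ζ)/S ζ x y) z = 0 := by
        rw [← heq.deriv_eq]; exact hzx z hz x y hxy
      have := (hdiff z hz).hasDerivAt
      rwa [h1] at this
    intro z hz
    have hc := Convex.norm_image_sub_le_of_norm_hasDerivWithin_le (C := 0)
      (f' := fun _ => (0:ℝ)) (fun w hw => (hd0 w hw).hasDerivWithinAt)
      (fun w _ => by simp) hJconv hz₀ hz
    rw [zero_mul, norm_le_zero_iff, sub_eq_zero] at hc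
    exact hc
  have hB : ∀ x y : ℝ, (x, y) ∈ Ω → ∀ z ∈ J,
      (U z*y + V₂ z)/S z x y = (U z₀*y + V₂ z₀)/S z₀ x y := by
    intro x y hxy
    have hdiff : ∀ z ∈ J, DifferentiableAt ℝ (fun ζ => (U ζ*y + V₂ ζ)/S ζ x y) z := by
      intro z hz
      exact (((hU.differentiable (by simp) z).mul_const y).add
        (hV₂.differentiable (by simp) z)).div ((contS x y).differentiable (by simp) z)
        (hSpos z hz x y hxy).ne'
    have hd0 : ∀ z ∈ J, HasDerivAt (fun ζ => (U ζ*y + V₂ ζ)/S ζ x y) 0 z := by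
      intro z hz
      have hpos := hSpos z hz x y hxy
      have hev : ∀ᶠ ζ in nhds z, 0 < S ζ x y := by
        have hmem : (fun ζ => S ζ x y) ⁻¹' Set.Ioi 0 ∈ nhds z :=
          (contS x y).continuous.continuousAt.preimage_mem_nhds (Ioi_mem_nhds hpos)
        filter_upwards [hmem] with ζ hζ using hζ
      have heq : (fun ζ => deriv (fun υ => Real.log (S ζ x υ)) y)
          =ᶠ[nhds z] fun ζ => (U ζ*y + V₂ ζ)/S ζ x y := by
        filter_upwards [hev] with ζ hζ
        exact ((hSderivy ζ x y).log hζ.ne').deriv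
      have h1 : deriv (fun ζ => (U ζ*y + V₂ ζ)/S ζ x y) z = 0 := by
        rw [← heq.deriv_eq]; exact hzy z hz x y hxy
      have := (hdiff z hz).hasDerivAt
      rwa [h1] at this
    intro z hz
    have hc := Convex.norm_image_sub_le_of_norm_hasDerivWithin_le (C := 0)
      (f' := fun _ => (0:ℝ)) (fun w hw => (hd0 w hw).hasDerivWithinAt)
      (fun w _ => by simp) hJconv hz₀ hz
    rw [zero_mul, norm_le_zero_iff, sub_eq_zero] at hc
    exact hc
  -- Step B: S z x y * S z₀ x₀ y₀ = S z x₀ y₀ * S z₀ x y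
  have hF : ∀ z ∈ J, ∀ x y : ℝ, (x, y) ∈ Ω →
      S z x y * S z₀ x₀ y₀ = S z x₀ y₀ * S z₀ x y := by
    intro z hz
    have hposz : ∀ p : ℝ × ℝ, p ∈ Ω → 0 < S z p.1 p.2 := fun p hp => hSpos z hz p.1 p.2 hp
    have hposz₀ : ∀ p : ℝ × ℝ, p ∈ Ω → 0 < S z₀ p.1 p.2 := fun p hp => hSpos z₀ hz₀ p.1 p.2 hp
    have hFdiff : ∀ p ∈ Ω, DifferentiableAt ℝ
        (fun p : ℝ × ℝ => Real.log (S z p.1 p.2) - Real.log (S z₀ p.1 p.2)) p := by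
      intro p hp
      have d1 : DifferentiableAt ℝ (fun p : ℝ × ℝ => S z p.1 p.2) p :=
        (contSp z).differentiable (by simp) p
      have d2 : DifferentiableAt ℝ (fun p : ℝ × ℝ => S z₀ p.1 p.2) p :=
        (contSp z₀).differentiable (by simp) p
      exact (DifferentiableAt.log d1 (hposz p hp).ne').sub
        (DifferentiableAt.log d2 (hposz₀ p hp).ne')
    have hFd0 : ∀ p ∈ Ω, HasFDerivAt
        (fun p : ℝ × ℝ => Real.log (S z p.1 p.2) - Real.log (S z₀ p.1 p.2)) (0 : (ℝ × ℝ) →L[ℝ] ℝ) p := by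
      intro p hp
      have hd := (hFdiff p hp).hasFDerivAt
      set L := fderiv ℝ (fun p : ℝ × ℝ => Real.log (S z p.1 p.2) - Real.log (S z₀ p.1 p.2)) p
        with hLdef
      have hp' : (p.1, p.2) ∈ Ω := by simpa using hp
      -- partial in x
      have hline1 : HasDerivAt (fun t : ℝ => (t, p.2)) ((1:ℝ), (0:ℝ)) p.1 := by
        simpa using (hasDerivAt_id p.1).prodMk (hasDerivAt_const p.1 p.2)
      have hcomp1 : HasDerivAt (fun t => Real.log (S z t p.2) - Real.log (S z₀ t p.2))
          (L (1, 0)) p.1 := by have := hd.comp_hasDerivAt p.1 hline1; exact this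
      have hval1 : HasDerivAt (fun t => Real.log (S z t p.2) - Real.log (S z₀ t p.2))
          ((U z*p.1 + V₁ z)/S z p.1 p.2 - (U z₀*p.1 + V₁ z₀)/S z₀ p.1 p.2) p.1 :=
        (((hSderivx z p.1 p.2).log (hposz p hp).ne')).sub
          (((hSderivx z₀ p.1 p.2).log (hposz₀ p hp).ne'))
      have h10 : L (1, 0) = 0 := by
        have := hcomp1.unique hval1
        rw [this, hA p.1 p.2 hp' z hz, sub_self]
      -- partial in y
      have hline2 : HasDerivAt (fun t : ℝ => (p.1, t)) ((0:ℝ), (1:ℝ)) p.2 := by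
        simpa using (hasDerivAt_const p.2 p.1).prodMk (hasDerivAt_id p.2)
      have hcomp2 : HasDerivAt (fun t => Real.log (S z p.1 t) - Real.log (S z₀ p.1 t))
          (L (0, 1)) p.2 := by have := hd.comp_hasDerivAt p.2 hline2; exact this
      have hval2 : HasDerivAt (fun t => Real.log (S z p.1 t) - Real.log (S z₀ p.1 t))
          ((U z*p.2 + V₂ z)/S z p.1 p.2 - (U z₀*p.2 + V₂ z₀)/S z₀ p.1 p.2) p.2 :=
        (((hSderivy z p.1 p.2).log (hposz p hp).ne')).sub
          (((hSderivy z₀ p.1 p.2).log (hposz₀ p hp).ne'))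
      have h01 : L (0, 1) = 0 := by
        have := hcomp2.unique hval2
        rw [this, hB p.1 p.2 hp' z hz, sub_self]
      have hL0 : L = 0 := by
        apply ContinuousLinearMap.ext
        intro v
        have hv : v = v.1 • ((1:ℝ), (0:ℝ)) + v.2 • ((0:ℝ), (1:ℝ)) := by
          simp [Prod.ext_iff]
        rw [hv, map_add, map_smul, map_smul, h10, h01]
        simp
      rwa [hL0] at hd
    -- local constancy
    have hloc : ∀ p ∈ Ω, ∃ ε > 0, Metric.ball p ε ⊆ Ω ∧ ∀ q ∈ Metric.ball p ε,
        Real.log (S z q.1 q.2) - Real.log (S z₀ q.1 q.2)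
          = Real.log (S z p.1 p.2) - Real.log (S z₀ p.1 p.2) := by
      intro p hp
      obtain ⟨ε, hε, hball⟩ := Metric.isOpen_iff.1 hΩopen p hp
      refine ⟨ε, hε, hball, fun q hq => ?_⟩
      refine (convex_ball p ε).is_const_of_fderivWithin_eq_zero
        (fun w hw => (hFdiff w (hball hw)).differentiableWithinAt) (fun w hw => ?_) hq
        (Metric.mem_ball_self hε)
      rw [fderivWithin_of_isOpen Metric.isOpen_ball hw]
      exact (hFd0 w (hball hw)).fderiv
    -- glue over connected Ω
    have hconst : ∀ p ∈ Ω,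
        Real.log (S z p.1 p.2) - Real.log (S z₀ p.1 p.2)
          = Real.log (S z x₀ y₀) - Real.log (S z₀ x₀ y₀) := by
      set c₀ := Real.log (S z x₀ y₀) - Real.log (S z₀ x₀ y₀) with hc₀
      set u := {p : ℝ × ℝ | p ∈ Ω ∧ Real.log (S z p.1 p.2) - Real.log (S z₀ p.1 p.2) = c₀}
        with hu_def
      set v := {p : ℝ × ℝ | p ∈ Ω ∧ Real.log (S z p.1 p.2) - Real.log (S z₀ p.1 p.2) ≠ c₀}
        with hv_def
      have hu : IsOpen u := by
        rw [Metric.isOpen_iff]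
        rintro p ⟨hp, hfp⟩
        obtain ⟨ε, hε, hball, hcst⟩ := hloc p hp
        exact ⟨ε, hε, fun q hq => ⟨hball hq, by rw [hcst q hq, hfp]⟩⟩
      have hv : IsOpen v := by
        rw [Metric.isOpen_iff]
        rintro p ⟨hp, hfp⟩
        obtain ⟨ε, hε, hball, hcst⟩ := hloc p hp
        exact ⟨ε, hε, fun q hq => ⟨hball hq, by rw [hcst q hq]; exact hfp⟩⟩
      have hsub : Ω ⊆ u ∪ v := by
        intro p hp
        by_cases h' : Real.log (S z p.1 p.2) - Real.log (S z₀ p.1 p.2) = c₀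
        · exact Or.inl ⟨hp, h'⟩
        · exact Or.inr ⟨hp, h'⟩
      have hdisj : Disjoint u v := by
        rw [Set.disjoint_left]
        rintro p ⟨_, hp1⟩ ⟨_, hp2⟩
        exact hp2 hp1
      have hne : (Ω ∩ u).Nonempty := ⟨(x₀, y₀), hp₀, hp₀, rfl⟩
      have := hΩconn.isPreconnected.subset_left_of_subset_union hu hv hdisj hsub hne
      exact fun p hp => (this hp).2
    intro x y hxy
    have h1 := hconst (x, y) hxy
    simp only at h1
    have ha := hSpos z hz x y hxy
    have hb := hSpos z₀ hz₀ x y hxy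
    have hcc := hSpos z hz x₀ y₀ hp₀
    have hd := hSpos z₀ hz₀ x₀ y₀ hp₀
    have hlog : Real.log (S z x y * S z₀ x₀ y₀) = Real.log (S z x₀ y₀ * S z₀ x y) := by
      rw [Real.log_mul ha.ne' hd.ne', Real.log_mul hcc.ne' hb.ne']
      linarith [h1]
    calc S z x y * S z₀ x₀ y₀ = Real.exp (Real.log (S z x y * S z₀ x₀ y₀)) :=
          (Real.exp_log (mul_pos ha hd)).symm
      _ = Real.exp (Real.log (S z x₀ y₀ * S z₀ x y)) := by rw [hlog]
      _ = S z x₀ y₀ * S z₀ x y := Real.exp_log (mul_pos hcc hb)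
  -- assemble
  set c := S z₀ x₀ y₀ with hcdef
  have hcpos : 0 < c := hSpos z₀ hz₀ x₀ y₀ hp₀
  refine ⟨fun z => S z x₀ y₀ / c, U z₀, V₁ z₀, V₂ z₀, W z₀,
    (contS x₀ y₀).div_const c, fun z hz => div_pos (hSpos z hz x₀ y₀ hp₀) hcpos, ?_, ?_⟩
  · -- coefficient proportionality
    intro z hz
    obtain ⟨ε, hε, hball⟩ := Metric.isOpen_iff.1 hΩopen (x₀, y₀) hp₀
    have h5 : ∀ x y : ℝ, max |x - x₀| |y - y₀| < ε →
        (1/2)*(U z - U z₀ * (S z x₀ y₀ / c))*(x^2+y^2)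
          + (V₁ z - V₁ z₀ * (S z x₀ y₀ / c))*x
          + (V₂ z - V₂ z₀ * (S z x₀ y₀ / c))*y
          + (2*(W z - W z₀ * (S z x₀ y₀ / c))) = 0 := by
      intro x y hmax
      have hmem : (x, y) ∈ Ω := by
        apply hball
        rw [Metric.mem_ball, Prod.dist_eq]
        simpa [Real.dist_eq] using hmax
      have h := hF z hz x y hmem
      have hfz : S z x y = (S z x₀ y₀ / c) * S z₀ x y := by
        field_simp
        linarith [h]
      rw [hS z x y, hS z₀ x y] at hfz
      linear_combination hfz
    obtain ⟨ha0, hb0, hc0, hd0⟩ := szek_quad_vanish hε h5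
    refine ⟨by linarith [ha0], by linarith [hb0], by linarith [hc0], by linarith [hd0]⟩
  · intro z hz x y hxy
    have h := hF z hz x y hxy
    have hfz : S z x y = (S z x₀ y₀ / c) * S z₀ x y := by
      field_simp
      linarith [h]
    rw [← hS z₀ x y]
    exact hfz
end

section
/- Let V ⊆ ℝ⁴ be open with coordinates (t,z,x,y) and let ρ, p, θ : V → ℝ be smooth functions. Assume on V: ∂_zp = ∂_xp = ∂_yp = 0 (the pressure depends only on t), ∂_tp ≠ 0, ∂_tρ ≠ 0, ρ + p ≠ 0, and the conservation equation ∂_tρ + (ρ + p)θ = 0. Define χ = (∂_tp)/(∂_tρ). Then at each point of V the three gradient covectors ∇χ, ∇p, ∇ρ are linearly dependent if and only if the three covectors ∇θ, ∇ρ, dt are linearly dependent (where dt denotes the constant covector (1,0,0,0)); i.e. the local thermal equilibrium condition dχ∧dp∧dρ = 0 is equivalent to dθ∧dρ∧dt = 0. -/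
/-- The constant covector dt = (1,0,0,0) on ℝ⁴ (coordinates (t,z,x,y) = (q 0, q 1, q 2, q 3)). -/
noncomputable def dtCovector : (Fin 4 → ℝ) →L[ℝ] ℝ :=
  ContinuousLinearMap.proj 0

/-- A covector on ℝ⁴ vanishing on the last three coordinate directions is a multiple of dt. -/
lemma covector_eq_smul_dt (f : (Fin 4 → ℝ) →L[ℝ] ℝ)
    (h1 : f (Pi.single 1 1) = 0) (h2 : f (Pi.single 2 1) = 0) (h3 : f (Pi.single 3 1) = 0) :
    f = f (Pi.single 0 1) • dtCovector := by
  ext v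
  have hv : v = ∑ i : Fin 4, v i • (Pi.single i 1 : Fin 4 → ℝ) := by
    funext j
    simp [Finset.sum_apply, Pi.single_apply]
  conv_lhs => rw [hv]
  simp [Fin.sum_univ_four, h1, h2, h3, dtCovector, mul_comm]

lemma span_eq_span_aux {M : Type*} [AddCommGroup M] [Module ℝ M]
    (X A B C dt : M) (a c1 c2 c3 : ℝ) (ha : a ≠ 0) (hc3 : c3 ≠ 0)
    (hA : A = a • dt) (hX : X = c1 • dt + c2 • B + c3 • C) :
    Submodule.span ℝ {X, A, B} = Submodule.span ℝ {C, B, dt} := by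
  have hdt2 : dt ∈ Submodule.span ℝ ({X, A, B} : Set M) := by
    have hA' : A ∈ Submodule.span ℝ ({X, A, B} : Set M) :=
      Submodule.subset_span (by simp)
    have : dt = a⁻¹ • A := by rw [hA, smul_smul, inv_mul_cancel₀ ha, one_smul]
    rw [this]
    exact Submodule.smul_mem _ _ hA'
  apply le_antisymm
  · rw [Submodule.span_le]
    intro v hv
    simp only [Set.mem_insert_iff, Set.mem_singleton_iff] at hv
    have hC : C ∈ Submodule.span ℝ ({C, B, dt} : Set M) := Submodule.subset_span (by simp)
    have hB : B ∈ Submodule.span ℝ ({C, B, dt} : Set M) := Submodule.subset_span (by simp)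
    have hdt : dt ∈ Submodule.span ℝ ({C, B, dt} : Set M) := Submodule.subset_span (by simp)
    rcases hv with rfl | rfl | rfl
    · rw [hX]
      exact Submodule.add_mem _ (Submodule.add_mem _ (Submodule.smul_mem _ _ hdt)
        (Submodule.smul_mem _ _ hB)) (Submodule.smul_mem _ _ hC)
    · rw [hA]; exact Submodule.smul_mem _ _ hdt
    · exact hB
  · rw [Submodule.span_le]
    intro v hv
    simp only [Set.mem_insert_iff, Set.mem_singleton_iff] at hv
    have hXm : X ∈ Submodule.span ℝ ({X, A, B} : Set M) := Submodule.subset_span (by simp)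
    have hBm : B ∈ Submodule.span ℝ ({X, A, B} : Set M) := Submodule.subset_span (by simp)
    have hCm : C ∈ Submodule.span ℝ ({X, A, B} : Set M) := by
      have hC : C = c3⁻¹ • X - (c3⁻¹ * c1) • dt - (c3⁻¹ * c2) • B := by
        rw [hX, smul_add, smul_add, smul_smul, smul_smul, smul_smul,
          inv_mul_cancel₀ hc3, one_smul]
        abel
      rw [hC]
      exact Submodule.sub_mem _ (Submodule.sub_mem _ (Submodule.smul_mem _ _ hXm)
        (Submodule.smul_mem _ _ hdt2)) (Submodule.smul_mem _ _ hBm)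
    rcases hv with h | h | h <;> rw [h]
    · exact hCm
    · exact hBm
    · exact hdt2

theorem stmt_14 (V : Set (Fin 4 → ℝ)) (hV : IsOpen V)
    (ρ p θ : (Fin 4 → ℝ) → ℝ)
    (hρ : ContDiffOn ℝ (⊤ : ℕ∞) ρ V) (hp : ContDiffOn ℝ (⊤ : ℕ∞) p V) (hθ : ContDiffOn ℝ (⊤ : ℕ∞) θ V)
    -- the pressure depends only on t: ∂_z p = ∂_x p = ∂_y p = 0 on V
    (hpz : ∀ q ∈ V, fderiv ℝ p q (Pi.single 1 1) = 0)
    (hpx : ∀ q ∈ V, fderiv ℝ p q (Pi.single 2 1) = 0)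
    (hpy : ∀ q ∈ V, fderiv ℝ p q (Pi.single 3 1) = 0)
    -- ∂_t p ≠ 0, ∂_t ρ ≠ 0, ρ + p ≠ 0 on V
    (hpt : ∀ q ∈ V, fderiv ℝ p q (Pi.single 0 1) ≠ 0)
    (hρt : ∀ q ∈ V, fderiv ℝ ρ q (Pi.single 0 1) ≠ 0)
    (hρp : ∀ q ∈ V, ρ q + p q ≠ 0)
    -- the conservation equation ∂_t ρ + (ρ + p)θ = 0 on V
    (hcons : ∀ q ∈ V, fderiv ℝ ρ q (Pi.single 0 1) + (ρ q + p q) * θ q = 0)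
    -- the indicatrix χ = (∂_t p)/(∂_t ρ)
    (χ : (Fin 4 → ℝ) → ℝ)
    (hχ : ∀ q ∈ V,
      χ q = fderiv ℝ p q (Pi.single 0 1) / fderiv ℝ ρ q (Pi.single 0 1)) :
    ∀ q ∈ V,
      (¬ LinearIndependent ℝ ![fderiv ℝ χ q, fderiv ℝ p q, fderiv ℝ ρ q]) ↔
      (¬ LinearIndependent ℝ ![fderiv ℝ θ q, fderiv ℝ ρ q, dtCovector]) := by
  intro q hq
  have hmem : V ∈ nhds q := hV.mem_nhds hq
  set e0 : Fin 4 → ℝ := Pi.single 0 1 with he0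
  -- smoothness at q
  have hpA : ContDiffAt ℝ (⊤ : ℕ∞) p q := hp.contDiffAt hmem
  have hρA : ContDiffAt ℝ (⊤ : ℕ∞) ρ q := hρ.contDiffAt hmem
  have hθA : ContDiffAt ℝ (⊤ : ℕ∞) θ q := hθ.contDiffAt hmem
  have hpd : DifferentiableAt ℝ p q := hpA.differentiableAt (by simp)
  have hρd : DifferentiableAt ℝ ρ q := hρA.differentiableAt (by simp)
  have hθd : DifferentiableAt ℝ θ q := hθA.differentiableAt (by simp)
  set A := fderiv ℝ p q with hA
  set B := fderiv ℝ ρ q with hB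
  set C := fderiv ℝ θ q with hC
  set a := A e0 with ha
  set r := B e0 with hr
  have hane : a ≠ 0 := hpt q hq
  have hrne : r ≠ 0 := hρt q hq
  have hsne : ρ q + p q ≠ 0 := hρp q hq
  -- A = a • dt
  have hAdt : A = a • dtCovector :=
    covector_eq_smul_dt A (hpz q hq) (hpx q hq) (hpy q hq)
  -- P := ∂ₜ p, R := ∂ₜ ρ as functions
  set P : (Fin 4 → ℝ) → ℝ := fun x => fderiv ℝ p x e0 with hP
  set R : (Fin 4 → ℝ) → ℝ := fun x => fderiv ℝ ρ x e0 with hR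
  have hfp : DifferentiableAt ℝ (fderiv ℝ p) q :=
    (hpA.fderiv_right (m := 1) (WithTop.coe_le_coe.mpr le_top : ((2:ℕ∞) : WithTop ℕ∞) ≤ ↑(⊤:ℕ∞))).differentiableAt one_ne_zero
  have hfρ : DifferentiableAt ℝ (fderiv ℝ ρ) q :=
    (hρA.fderiv_right (m := 1) (WithTop.coe_le_coe.mpr le_top : ((2:ℕ∞) : WithTop ℕ∞) ≤ ↑(⊤:ℕ∞))).differentiableAt one_ne_zero
  have hPd : DifferentiableAt ℝ P q := hfp.clm_apply (differentiableAt_const e0)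
  have hRd : DifferentiableAt ℝ R q := hfρ.clm_apply (differentiableAt_const e0)
  set P' := fderiv ℝ P q with hP'
  set R' := fderiv ℝ R q with hR'
  set b := P' e0 with hb
  -- P' is a multiple of dt, via symmetry of second derivatives
  have hsymm := hpA.isSymmSndFDerivAt (by simp; exact (WithTop.coe_le_coe.mpr le_top : ((2:ℕ∞) : WithTop ℕ∞) ≤ ↑(⊤:ℕ∞)))
  have hsecond : ∀ w : Fin 4 → ℝ, P' w = fderiv ℝ (fderiv ℝ p) q w e0 := by
    intro w
    rw [hP', hP, fderiv_clm_apply hfp (differentiableAt_const e0)]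
    simp
  have hspatial : ∀ i : Fin 4, (∀ x ∈ V, fderiv ℝ p x (Pi.single i 1) = 0) →
      P' (Pi.single i 1) = 0 := by
    intro i hi
    rw [hsecond, hsymm (Pi.single i 1) e0]
    have heq : (fun x => fderiv ℝ p x (Pi.single i 1)) =ᶠ[nhds q] fun _ => (0 : ℝ) :=
      Filter.eventuallyEq_of_mem hmem fun x hx => hi x hx
    have h0 : fderiv ℝ (fun x => fderiv ℝ p x (Pi.single i 1)) q = 0 := by
      rw [heq.fderiv_eq]; exact fderiv_const_apply 0
    have := fderiv_clm_apply hfp (differentiableAt_const (Pi.single i 1 : Fin 4 → ℝ))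
    have h1 : fderiv ℝ (fun x => fderiv ℝ p x (Pi.single i 1)) q e0
        = fderiv ℝ (fderiv ℝ p) q e0 (Pi.single i 1) := by
      rw [this]; simp
    rw [← h1, h0]
    simp
  have hPdt : P' = b • dtCovector :=
    covector_eq_smul_dt P' (hspatial 1 (hpz)) (hspatial 2 (hpx)) (hspatial 3 (hpy))
  -- R' from the conservation equation
  have hRcons : R =ᶠ[nhds q] fun x => -((ρ x + p x) * θ x) := by
    apply Filter.eventuallyEq_of_mem hmem
    intro x hx
    have := hcons x hx
    simp only [hR]
    linarith
  have hRHS : HasFDerivAt (fun x => -((ρ x + p x) * θ x))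
      (-((ρ q + p q) • C + θ q • (B + A))) q := by
    have := ((hρd.hasFDerivAt.add hpd.hasFDerivAt).mul hθd.hasFDerivAt).neg
    exact this
  have hR'eq : R' = -((ρ q + p q) • C + θ q • (B + A)) := by
    rw [hR', hRcons.fderiv_eq, hRHS.fderiv]
  -- the value r = R q, and P q = a
  have hRq : R q = r := rfl
  have hPq : P q = a := rfl
  -- derivative of χ
  have hinv : HasFDerivAt (fun x => (R x)⁻¹) ((-(r ^ 2)⁻¹) • R') q := by
    have hcomp := (hasFDerivAt_inv (𝕜 := ℝ) (by rw [hRq]; exact hrne)).comp q hRd.hasFDerivAt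
    have : (ContinuousLinearMap.toSpanSingleton ℝ (-(R q ^ 2)⁻¹)).comp R' = (-(r ^ 2)⁻¹) • R' := by
      ext v
      simp [hRq, mul_comm]
    rw [← hR', this] at hcomp
    exact hcomp
  have hχd : HasFDerivAt (fun x => P x / R x)
      (P q • ((-(r ^ 2)⁻¹) • R') + (R q)⁻¹ • P') q := by
    have := hPd.hasFDerivAt.mul hinv
    simp only [div_eq_mul_inv]; exact this
  have hχev : χ =ᶠ[nhds q] fun x => P x / R x :=
    Filter.eventuallyEq_of_mem hmem fun x hx => hχ x hx
  have hX : fderiv ℝ χ q = a • ((-(r ^ 2)⁻¹) • R') + r⁻¹ • P' := by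
    rw [hχev.fderiv_eq, hχd.fderiv, hPq, hRq]
  -- final decomposition of fderiv χ
  set s := ρ q + p q with hs
  set c1 : ℝ := r⁻¹ * b + a * (r ^ 2)⁻¹ * θ q * a with hc1
  set c2 : ℝ := a * (r ^ 2)⁻¹ * θ q with hc2
  set c3 : ℝ := a * (r ^ 2)⁻¹ * s with hc3
  have hc3ne : c3 ≠ 0 := by
    rw [hc3]
    exact mul_ne_zero (mul_ne_zero hane (inv_ne_zero (pow_ne_zero 2 hrne))) hsne
  have hXdec : fderiv ℝ χ q = c1 • dtCovector + c2 • B + c3 • C := by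
    rw [hX, hR'eq, hPdt, hAdt, hc1, hc2, hc3, hs]
    module
  -- span equality
  have hspan : Submodule.span ℝ ({fderiv ℝ χ q, A, B} : Set ((Fin 4 → ℝ) →L[ℝ] ℝ))
      = Submodule.span ℝ ({C, B, dtCovector} : Set ((Fin 4 → ℝ) →L[ℝ] ℝ)) :=
    span_eq_span_aux _ _ _ _ _ a c1 c2 c3 hane hc3ne hAdt hXdec
  have hrange1 : Set.range ![fderiv ℝ χ q, A, B] = {fderiv ℝ χ q, A, B} := by
    rw [Matrix.range_cons, Matrix.range_cons, Matrix.range_cons, Matrix.range_empty,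
      Set.union_empty, Set.singleton_union, Set.singleton_union]
  have hrange2 : Set.range ![C, B, dtCovector] = {C, B, dtCovector} := by
    rw [Matrix.range_cons, Matrix.range_cons, Matrix.range_cons, Matrix.range_empty,
      Set.union_empty, Set.singleton_union, Set.singleton_union]
  rw [not_iff_not]
  rw [linearIndependent_iff_card_eq_finrank_span, linearIndependent_iff_card_eq_finrank_span]
  unfold Set.finrank
  rw [hrange1, hrange2, hspan]
end
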